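/- arXiv:1211.2061 — 4 statements merged into one kernel-verified Lean document; each statement's English description precedes it below -/
import Mathlib

section
/- Let Ω = (0,L), a' ∈ Ω, Ω₁ = (0,a'), Ω₂ = (a',L), and let c be a diffusion coefficient with 0 < c_min ≤ c ≤ c_max that is C¹ on [0,a'] and on [a',L] separately (with a possible jump at a'). Let Ω̃₁, Ω̃₂ be smooth open connected neighborhoods of [0,a'] and [a',L] in ℝ and let ω ⊂ Ω₂ be a nonempty open set. Then there exists a continuous function ψ on [0,L] which equals ψ₁ on [0,a'] and ψ₂ on [a',L] with ψ_i ∈ C^∞ on the closure of Ω̃_i, such that: ψ > 0 in Ω, ψ(0) = ψ(L) = 0, ψ₂' ≠ 0 on [a',L] \ ω, ψ₁' ≠ 0 on [0,a'], and there exists α₀ > 0 such that the symmetric 2×2 matrix A with entries a₁₁ = ψ'(a'⁺) − ψ'(a'⁻), a₂₂ = (c(a'⁺)ψ'(a'⁺) − c(a'⁻)ψ'(a'⁻))²·ψ'(a'⁺) + (c(a'⁺)²ψ'(a'⁺)³ − c(a'⁻)²ψ'(a'⁻)³), a₁₂ = a₂₁ = (c(a'⁺)ψ'(a'⁺) − c(a'⁻)ψ'(a'⁻))·ψ'(a'⁺)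 satisfies ⟨Au, u⟩ ≥ α₀|u|² for every u ∈ ℝ². -/
private lemma quadform_aux (p q b1 b2 cmin cmax : ℝ) (hp : 0 < p) (hq : 0 < q)
    (hb1 : cmin ≤ b1 ∧ b1 ≤ cmax) (hb2 : cmin ≤ b2 ∧ b2 ≤ cmax) (hcmin : 0 < cmin)
    (hpq : (3 * cmin + 2 * cmax) * p ≤ cmin * q) :
    ∃ α0 : ℝ, 0 < α0 ∧ ∀ X Y : ℝ,
      (q - p) * X ^ 2 + 2 * ((b2 * q - b1 * p) * q) * X * Y
        + ((b2 * q - b1 * p) ^ 2 * q + (b2 ^ 2 * q ^ 3 - b1 ^ 2 * p ^ 3)) * Y ^ 2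
        ≥ α0 * (X ^ 2 + Y ^ 2) := by
  have hcmax : cmin ≤ cmax := le_trans hb1.1 hb1.2
  have hb1p : 0 < b1 := lt_of_lt_of_le hcmin hb1.1
  have hb2p : 0 < b2 := lt_of_lt_of_le hcmin hb2.1
  have hq3p : 3 * p ≤ q := by nlinarith
  have hq2 : 2 * b1 * p ≤ b2 * q := by
    nlinarith [mul_le_mul_of_nonneg_right hb2.1 hq.le, mul_le_mul_of_nonneg_right hb1.2 hp.le]
  have h4 : (2 * b1 * p) ^ 2 ≤ (b2 * q) ^ 2 := by
    nlinarith [mul_self_le_mul_self (by positivity : (0:ℝ) ≤ 2 * b1 * p) hq2]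
  have h5 : 4 * b1 ^ 2 * p ^ 2 * q ≤ b2 ^ 2 * q ^ 3 := by
    nlinarith [mul_le_mul_of_nonneg_right h4 hq.le]
  set a : ℝ := q - p with ha
  set b : ℝ := (b2 * q - b1 * p) * q with hb
  set c : ℝ := (b2 * q - b1 * p) ^ 2 * q + (b2 ^ 2 * q ^ 3 - b1 ^ 2 * p ^ 3) with hc
  have hapos : 0 < a := by simp only [ha]; nlinarith
  have hcpos : 0 < c := by
    have h6 : b1 ^ 2 * p ^ 3 < b2 ^ 2 * q ^ 3 := by
      nlinarith [mul_pos (mul_pos hb1p hb1p) (mul_pos hp hp)]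
    have := sq_nonneg (b2 * q - b1 * p)
    simp only [hc]; nlinarith
  have hdet : 0 < a * c - b ^ 2 := by
    have key : a * c - b ^ 2 =
        b2^2*q^4 - 2*b2^2*p*q^3 + 2*b1*b2*p^2*q^2 - 2*b1^2*p^3*q + b1^2*p^4 := by
      simp only [ha, hb, hc]; ring
    rw [key]
    have h7 : 3 * (b2^2*p*q^3) ≤ b2^2*q^4 := by
      calc 3 * (b2^2*p*q^3) = (3*p) * (b2^2*q^3) := by ring
        _ ≤ q * (b2^2*q^3) := mul_le_mul_of_nonneg_right hq3p (by positivity)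
        _ = b2^2*q^4 := by ring
    have h8 : 4 * (b1^2*p^3*q) ≤ b2^2*p*q^3 := by
      calc 4 * (b1^2*p^3*q) = (4*b1^2*p^2*q) * p := by ring
        _ ≤ (b2^2*q^3) * p := mul_le_mul_of_nonneg_right h5 hp.le
        _ = b2^2*p*q^3 := by ring
    have pos1 : 0 < b1^2*p^3*q := by positivity
    have pos2 : 0 < b1*b2*p^2*q^2 := by positivity
    have pos3 : 0 < b1^2*p^4 := by positivity
    linarith
  refine ⟨(a * c - b ^ 2) / (a + c), div_pos hdet (by linarith), fun X Y => ?_⟩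
  set α0 : ℝ := (a * c - b ^ 2) / (a + c) with hα0
  have hac : 0 < a + c := by linarith
  have haα : 0 < a - α0 := by
    rw [show a - α0 = (a ^ 2 + b ^ 2) / (a + c) by
      rw [hα0, eq_div_iff hac.ne', sub_mul, div_mul_cancel₀ _ hac.ne']; ring]
    have : 0 < a ^ 2 + b ^ 2 := by positivity
    positivity
  have hid : (a - α0) * (c - α0) - b ^ 2 = α0 ^ 2 := by
    have h' : α0 * (a + c) = a * c - b ^ 2 := by rw [hα0, div_mul_cancel₀ _ hac.ne']
    linear_combination -h'
  have hG : 0 ≤ (a - α0) * ((a*X^2 + 2*b*X*Y + c*Y^2) - α0*(X^2+Y^2)) := by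
    have e : (a - α0) * ((a*X^2 + 2*b*X*Y + c*Y^2) - α0*(X^2+Y^2))
        = ((a-α0)*X + b*Y)^2 + ((a-α0)*(c-α0) - b^2) * Y^2 := by ring
    rw [e, hid]; positivity
  have h9 := (mul_nonneg_iff_of_pos_left haα).mp hG
  linarith

/-- Existence of a weight function `ψ` for the Carleman estimate with a jump of the
diffusion coefficient `c` at `a' ∈ Ω = (0,L)`.  The coefficient is modelled by two
`C¹` functions `c1` (on `[0,a']`) and `c2` (on `[a',L]`), so that `c(a'⁻) = c1 a'`
and `c(a'⁺) = c2 a'`.  The produced weight `ψ` is continuous on `[0,L]`, equals the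
smooth functions `ψ1`, `ψ2` on `[0,a']`, `[a',L]` respectively, is positive inside,
vanishes on the boundary, has nonvanishing one-sided derivatives (outside `ω` on the
right piece), and the jump matrix `A` at `a'` is positive definite. -/
theorem stmt0 (L a' : ℝ) (hL : 0 < L) (ha'0 : 0 < a') (ha'L : a' < L)
    (cmin cmax : ℝ) (hcmin : 0 < cmin)
    (c1 c2 : ℝ → ℝ) (hc1 : ContDiff ℝ 1 c1) (hc2 : ContDiff ℝ 1 c2)
    (hc1b : ∀ x ∈ Set.Icc (0 : ℝ) a', cmin ≤ c1 x ∧ c1 x ≤ cmax)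
    (hc2b : ∀ x ∈ Set.Icc a' L, cmin ≤ c2 x ∧ c2 x ≤ cmax)
    (Ω1t Ω2t : Set ℝ) (hΩ1o : IsOpen Ω1t) (hΩ2o : IsOpen Ω2t)
    (hΩ1c : IsConnected Ω1t) (hΩ2c : IsConnected Ω2t)
    (hΩ1 : Set.Icc (0 : ℝ) a' ⊆ Ω1t) (hΩ2 : Set.Icc a' L ⊆ Ω2t)
    (ω : Set ℝ) (hω : IsOpen ω) (hωne : ω.Nonempty) (hωsub : ω ⊆ Set.Ioo a' L) :
    ∃ ψ ψ1 ψ2 : ℝ → ℝ,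
      ContinuousOn ψ (Set.Icc 0 L) ∧
      ContDiffOn ℝ (⊤ : ℕ∞) ψ1 (closure Ω1t) ∧ ContDiffOn ℝ (⊤ : ℕ∞) ψ2 (closure Ω2t) ∧
      (∀ x ∈ Set.Icc (0 : ℝ) a', ψ x = ψ1 x) ∧
      (∀ x ∈ Set.Icc a' L, ψ x = ψ2 x) ∧
      (∀ x ∈ Set.Ioo (0 : ℝ) L, 0 < ψ x) ∧
      ψ 0 = 0 ∧ ψ L = 0 ∧
      (∀ x ∈ Set.Icc a' L \ ω, deriv ψ2 x ≠ 0) ∧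
      (∀ x ∈ Set.Icc (0 : ℝ) a', deriv ψ1 x ≠ 0) ∧
      (∃ α0 : ℝ, 0 < α0 ∧ ∀ X Y : ℝ,
        (deriv ψ2 a' - deriv ψ1 a') * X ^ 2
          + 2 * ((c2 a' * deriv ψ2 a' - c1 a' * deriv ψ1 a') * deriv ψ2 a') * X * Y
          + ((c2 a' * deriv ψ2 a' - c1 a' * deriv ψ1 a') ^ 2 * deriv ψ2 a'
              + ((c2 a') ^ 2 * (deriv ψ2 a') ^ 3 - (c1 a') ^ 2 * (deriv ψ1 a') ^ 3)) * Y ^ 2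
          ≥ α0 * (X ^ 2 + Y ^ 2)) := by
  obtain ⟨x0, hx0ω⟩ := hωne
  obtain ⟨hax0, hx0L⟩ := hωsub hx0ω
  have hLx0 : 0 < L - x0 := sub_pos.2 hx0L
  have hx0a : 0 < x0 - a' := sub_pos.2 hax0
  set lam : ℝ := 2 / (L - x0) with hlam
  have hlampos : 0 < lam := by positivity
  set F : ℝ → ℝ := fun x => Real.exp (lam * x) * (lam * (x0 - x) + 1) / lam ^ 2 with hFdef
  have hFd : ∀ x : ℝ, HasDerivAt F (Real.exp (lam * x) * (x0 - x)) x := by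
    intro x
    have h1 : HasDerivAt (fun x : ℝ => lam * x) lam x := by
      simpa using (hasDerivAt_id x).const_mul lam
    have h2 : HasDerivAt (fun x : ℝ => Real.exp (lam * x)) (Real.exp (lam * x) * lam) x := h1.exp
    have h3 : HasDerivAt (fun x : ℝ => lam * (x0 - x) + 1) (-lam) x := by
      simpa using (((hasDerivAt_id x).const_sub x0).const_mul lam).add_const 1
    have h4 := (h2.mul h3).div_const (lam ^ 2)
    exact h4.congr_deriv (by rw [div_eq_iff (by positivity)]; ring)
  set ψ2 : ℝ → ℝ := fun x => F x - F L with hψ2def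
  have hψ2d : ∀ x : ℝ, HasDerivAt ψ2 (Real.exp (lam * x) * (x0 - x)) x :=
    fun x => (hFd x).sub_const (F L)
  have hderiv2 : ∀ x : ℝ, deriv ψ2 x = Real.exp (lam * x) * (x0 - x) :=
    fun x => (hψ2d x).deriv
  have hFL : F L = -(Real.exp (lam * L)) / lam ^ 2 := by
    have hl : lam * (x0 - L) + 1 = -1 := by
      rw [hlam]; field_simp; ring
    simp only [hFdef, hl]
    ring
  have hFLneg : F L < 0 := by
    rw [hFL]
    have := Real.exp_pos (lam * L)
    have := sq_nonneg lam
    have h2 : (0:ℝ) < lam ^ 2 := by positivity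
    exact div_neg_of_neg_of_pos (by linarith) h2
  have hFa : 0 < F a' := by
    simp only [hFdef]
    have h1 : 0 < lam * (x0 - a') + 1 := by positivity
    positivity
  set V : ℝ := F a' - F L with hVdef
  have hV : 0 < V := by simp only [hVdef]; linarith
  set q : ℝ := Real.exp (lam * a') * (x0 - a') with hqdef
  have hq : 0 < q := by positivity
  have hcmax0 : 0 < cmax := by
    have h := hc1b 0 ⟨le_refl 0, ha'0.le⟩
    linarith
  set p : ℝ := min (cmin * q / (3 * cmin + 2 * cmax)) (V / a') with hpdef
  have hp : 0 < p := lt_min (by positivity) (by positivity)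
  have hpq : (3 * cmin + 2 * cmax) * p ≤ cmin * q := by
    have h := min_le_left (cmin * q / (3 * cmin + 2 * cmax)) (V / a')
    rw [← hpdef] at h
    have hd : (0:ℝ) < 3 * cmin + 2 * cmax := by positivity
    rw [div_eq_mul_inv] at h
    calc (3 * cmin + 2 * cmax) * p ≤ (3 * cmin + 2 * cmax) * (cmin * q * (3 * cmin + 2 * cmax)⁻¹) :=
          mul_le_mul_of_nonneg_left h hd.le
      _ = cmin * q := by field_simp
  have hpV : p ≤ V / a' := by
    rw [hpdef]; exact min_le_right _ _
  set α : ℝ := 2 * V / a' - p with hαdef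
  set β : ℝ := (p - V / a') / a' with hβdef
  have hVa : 0 < V / a' := by positivity
  have hα : 0 < α := by rw [hαdef]; have : 2 * V / a' = V / a' + V / a' := by ring
                        rw [this]; linarith
  set ψ1 : ℝ → ℝ := fun x => α * x + β * x ^ 2 with hψ1def
  have hψ1d : ∀ x : ℝ, HasDerivAt ψ1 (α + 2 * β * x) x := by
    intro x
    have h1 : HasDerivAt (fun x : ℝ => α * x) α x := by
      simpa using (hasDerivAt_id x).const_mul α
    have h2 : HasDerivAt (fun x : ℝ => β * x ^ 2) (β * (2 * x)) x := by
      simpa using (hasDerivAt_pow 2 x).const_mul β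
    have := h1.add h2
    exact this.congr_deriv (by ring)
  have hderiv1 : ∀ x : ℝ, deriv ψ1 x = α + 2 * β * x := fun x => (hψ1d x).deriv
  have hd1a : deriv ψ1 a' = p := by
    rw [hderiv1 a', hαdef, hβdef]
    field_simp
    ring
  have hd2a : deriv ψ2 a' = q := by rw [hderiv2 a', hqdef]
  have hψ1a : ψ1 a' = V := by
    simp only [hψ1def, hαdef, hβdef]
    field_simp
    ring
  have hψ2a : ψ2 a' = V := rfl
  -- positivity of ψ1' on [0,a']
  have hd1pos : ∀ x ∈ Set.Icc (0:ℝ) a', 0 < α + 2 * β * x := by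
    intro x hx
    have haux : a' * (α + 2 * β * x) = α * (a' - x) + p * x := by
      simp only [hαdef, hβdef]
      field_simp
      ring
    have h2 : 0 < α * (a' - x) + p * x := by
      rcases eq_or_lt_of_le hx.1 with h | h
      · rw [← h]
        have h5 : 0 < α * (a' - 0) := mul_pos hα (by linarith [hx.2])
        have h6 : p * 0 = 0 := mul_zero p
        linarith
      · have h5 := mul_nonneg hα.le (sub_nonneg.2 hx.2)
        have h6 := mul_pos hp h
        linarith
    have h4 : 0 < a' * (α + 2 * β * x) := haux ▸ h2
    exact pos_of_mul_pos_right h4 ha'0.le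
  -- positivity of ψ1 on (0, a']
  have hψ1pos : ∀ x ∈ Set.Ioc (0:ℝ) a', 0 < ψ1 x := by
    intro x hx
    have haux : a' * (α + β * x) = α * (a' - x) + (V / a') * x := by
      simp only [hαdef, hβdef]
      field_simp
      ring
    have h2 : 0 < α * (a' - x) + V / a' * x :=
      add_pos_of_nonneg_of_pos (mul_nonneg hα.le (sub_nonneg.2 hx.2)) (mul_pos hVa hx.1)
    have h4 : 0 < a' * (α + β * x) := haux ▸ h2
    have h3 : 0 < α + β * x := pos_of_mul_pos_right h4 ha'0.le
    have : ψ1 x = x * (α + β * x) := by simp only [hψ1def]; ring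
    rw [this]
    exact mul_pos hx.1 h3
  -- monotonicity of F
  have hFcont : Continuous F := by
    have : Continuous fun x : ℝ => Real.exp (lam * x) := by fun_prop
    fun_prop
  have hmono : StrictMonoOn F (Set.Icc a' x0) := by
    apply strictMonoOn_of_deriv_pos (convex_Icc a' x0) hFcont.continuousOn
    intro x hx
    rw [interior_Icc] at hx
    rw [(hFd x).deriv]
    have : 0 < x0 - x := sub_pos.2 hx.2
    positivity
  have hanti : StrictAntiOn F (Set.Icc x0 L) := by
    apply strictAntiOn_of_deriv_neg (convex_Icc x0 L) hFcont.continuousOn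
    intro x hx
    rw [interior_Icc] at hx
    rw [(hFd x).deriv]
    have h1 : x0 - x < 0 := sub_neg.2 hx.1
    have h2 := Real.exp_pos (lam * x)
    exact mul_neg_of_pos_of_neg h2 h1
  -- positivity of ψ2 on (a', L)
  have hψ2pos : ∀ x ∈ Set.Ioo a' L, 0 < ψ2 x := by
    intro x hx
    have : F L < F x := by
      rcases le_or_gt x x0 with h | h
      · have h1 : F a' < F x := hmono ⟨le_refl a', hax0.le⟩ ⟨hx.1.le, h⟩ hx.1
        linarith
      · exact hanti ⟨h.le, hx.2.le⟩ ⟨hx0L.le, le_refl L⟩ hx.2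
    simp only [hψ2def]
    linarith
  -- smoothness and boundary values
  have hs1 : ContDiff ℝ (⊤ : ℕ∞) ψ1 := by
    rw [hψ1def]; fun_prop
  have hs2 : ContDiff ℝ (⊤ : ℕ∞) ψ2 := by
    rw [hψ2def, hFdef]
    have h1 : ContDiff ℝ (⊤ : ℕ∞) fun x : ℝ => Real.exp (lam * x) * (lam * (x0 - x) + 1) := by
      fun_prop
    exact (h1.div_const (lam ^ 2)).sub contDiff_const
  have hψ10 : ψ1 0 = 0 := by simp only [hψ1def]; ring
  have hψ2L : ψ2 L = 0 := by simp only [hψ2def, sub_self]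
  have hb1 := hc1b a' ⟨ha'0.le, le_refl a'⟩
  have hb2 := hc2b a' ⟨le_refl a', ha'L.le⟩
  clear_value β α p q V ψ2 ψ1 F lam
  -- the full weight
  set ψ : ℝ → ℝ := fun x => if x ≤ a' then ψ1 x else ψ2 x with hψdef
  have hψcont : Continuous ψ := by
    apply Continuous.if_le hs1.continuous hs2.continuous continuous_id continuous_const
    intro x hx
    rw [show x = a' from hx, hψ1a, hψ2a]
  refine ⟨ψ, ψ1, ψ2, hψcont.continuousOn, ?_, ?_, ?_, ?_, ?_, ?_, ?_, ?_, ?_, ?_⟩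
  · exact hs1.contDiffOn
  · exact hs2.contDiffOn
  · intro x hx
    simp only [hψdef, if_pos hx.2]
  · intro x hx
    rcases eq_or_lt_of_le hx.1 with h | h
    · simp only [hψdef, ← h, if_pos (le_refl a')]
      rw [hψ1a, hψ2a]
    · simp only [hψdef, if_neg (not_le.2 h)]
  · intro x hx
    by_cases h : x ≤ a'
    · simp only [hψdef, if_pos h]
      exact hψ1pos x ⟨hx.1, h⟩
    · simp only [hψdef, if_neg h]
      exact hψ2pos x ⟨not_le.1 h, hx.2⟩
  · simp only [hψdef, if_pos ha'0.le]
    exact hψ10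
  · simp only [hψdef, if_neg (not_le.2 ha'L)]
    exact hψ2L
  · intro x hx
    rw [hderiv2 x]
    have hxne : x ≠ x0 := fun h => hx.2 (h ▸ hx0ω)
    have h1 : Real.exp (lam * x) ≠ 0 := (Real.exp_pos _).ne'
    have h2 : x0 - x ≠ 0 := sub_ne_zero.2 (Ne.symm hxne)
    exact mul_ne_zero h1 h2
  · intro x hx
    rw [hderiv1 x]
    exact (hd1pos x hx).ne'
  · rw [hd1a, hd2a]
    exact quadform_aux p q (c1 a') (c2 a') cmin cmax hp hq hb1 hb2 hcmin hpq
end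

section
/- For every α ∈ ℕ, i ∈ {1,2}, and λ ≥ 1 there exists C = C(λ, α, ψ_i, K) such that for all τ ≥ 1, t ∈ [0,T] and x: |∂_t( r_i ∂_x^α ρ_i )(t,x)| ≤ C·s(t)^α·T·θ(t). The same estimate holds with r_i and ρ_i interchanged. -/
open Real
open Finset
open scoped ContDiff

lemma structLemma (ϕ : ℝ → ℝ) (hϕ : ContDiff ℝ ∞ ϕ) (α : ℕ) :
    ∃ q : ℕ → ℝ → ℝ, (∀ k, ContDiff ℝ ∞ (q k)) ∧ (∀ k, α < k → q k = 0) ∧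
      ∀ s x : ℝ, iteratedDeriv α (fun z => Real.exp (s * ϕ z)) x
        = (∑ k ∈ Finset.range (α+1), s ^ k * q k x) * Real.exp (s * ϕ x) := by
  induction α with
  | zero =>
    refine ⟨fun k => if k = 0 then (fun _ => 1) else (fun _ => 0), ?_, ?_, ?_⟩
    · intro k; cases k <;> simp <;> exact contDiff_const
    · intro k hk; funext x; simp [hk.ne']
    · intro s x; simp [iteratedDeriv_zero]
  | succ α ih =>
    obtain ⟨q, hq, hv, hf⟩ := ih
    set Q : ℕ → ℝ → ℝ := fun k x =>
      deriv (q k) x + deriv ϕ x * (if k = 0 then 0 else q (k-1) x) with hQ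
    have hqd : ∀ k, ContDiff ℝ ∞ (deriv (q k)) := fun k =>
      ((contDiff_infty_iff_deriv.mp (hq k)).2)
    have hϕd : ContDiff ℝ ∞ (deriv ϕ) := (contDiff_infty_iff_deriv.mp hϕ).2
    refine ⟨Q, ?_, ?_, ?_⟩
    · intro k
      match k with
      | 0 => simpa [hQ] using (hqd 0)
      | (k+1) =>
        simpa [hQ] using (hqd (k+1)).add (hϕd.mul (hq k))
    · intro k hk
      have h1 : q k = 0 := hv k (by omega)
      have h2 : q (k-1) = 0 := hv (k-1) (by omega)
      funext x
      have hk0 : k ≠ 0 := by omega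
      have hd : deriv (q k) x = 0 := by
        rw [h1, show (0:ℝ→ℝ) = fun _ => (0:ℝ) from rfl, deriv_const]
      simp [hQ, hd, h2, hk0]
    · intro s x
      have h2 : iteratedDeriv α (fun z => Real.exp (s*ϕ z))
          = fun y => (∑ k ∈ range (α+1), s^k * q k y) * Real.exp (s*ϕ y) :=
        funext fun y => hf s y
      rw [iteratedDeriv_succ, h2]
      have hG : HasDerivAt (fun y => ∑ k ∈ range (α+1), s^k * q k y)
          (∑ k ∈ range (α+1), s^k * deriv (q k) x) x := by
        apply HasDerivAt.fun_sum
        intro k _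
        exact (((hq k).differentiable (by simp) x).hasDerivAt).const_mul _
      have hE : HasDerivAt (fun y => Real.exp (s * ϕ y))
          (Real.exp (s * ϕ x) * (s * deriv ϕ x)) x := by
        exact (((hϕ.differentiable (by simp) x).hasDerivAt).const_mul s).exp
      have hprod := hG.fun_mul hE
      rw [hprod.deriv]
      have hzero : deriv (q (α+1)) x = 0 := by
        rw [hv (α+1) (Nat.lt_succ_self α), show (0:ℝ→ℝ) = fun _ => (0:ℝ) from rfl, deriv_const]
      have hsplit : ∑ k ∈ range (α+1+1), s^k * Q k x
          = (∑ k ∈ range (α+1+1), s^k * deriv (q k) x)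
            + ∑ k ∈ range (α+1+1), s^k * (deriv ϕ x * (if k = 0 then 0 else q (k-1) x)) := by
        simp [hQ, mul_add, Finset.sum_add_distrib]
      have hfirst : ∑ k ∈ range (α+1+1), s^k * deriv (q k) x
          = ∑ k ∈ range (α+1), s^k * deriv (q k) x := by
        rw [Finset.sum_range_succ, hzero]; ring
      have hsecond : ∑ k ∈ range (α+1+1), s^k * (deriv ϕ x * (if k = 0 then 0 else q (k-1) x))
          = (∑ i ∈ range (α+1), s^i * q i x) * (s * deriv ϕ x) := by
        rw [Finset.sum_range_succ']
        simp only [Nat.add_sub_cancel, Nat.succ_ne_zero, if_false, pow_zero, if_pos rfl,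
          if_true, mul_zero, add_zero, one_mul]
        rw [Finset.sum_mul]
        apply Finset.sum_congr rfl
        intros; ring
      rw [hsplit, hfirst, hsecond]
      ring

set_option maxHeartbeats 1000000

/-- Time-derivative estimates for the Carleman weight functions:
for every `α ∈ ℕ` there is `C = C(λ, α, ψ, K)` with
`|∂_t (r ∂_x^α ρ)(t,x)| ≤ C s(t)^α T θ(t)` for all `τ ≥ 1`, `t ∈ [0,T]`, `x ∈ [0,1]`,
where `θ(t) = ((t+α₀)(T+α₀-t))⁻¹`, `s = τθ`, `ϕ = e^{λψ} - e^{λK}`,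
`r = e^{sϕ}`, `ρ = r⁻¹ = e^{-sϕ}`.  The same estimate holds with `r` and `ρ`
interchanged.  (`ψ` stands for either of the two smooth pieces `ψ₁`, `ψ₂`.) -/
theorem stmt3 (T a0 : ℝ) (hT : 0 < T) (ha0 : 0 < a0) (ha0T : a0 < T)
    (ψ : ℝ → ℝ) (hψ : ContDiff ℝ (⊤ : ℕ∞) ψ)
    (lam K : ℝ) (hlam : 1 ≤ lam) (hK : ∀ x ∈ Set.Icc (0 : ℝ) 1, |ψ x| < K)
    (θ : ℝ → ℝ) (hθ : θ = fun t => ((t + a0) * (T + a0 - t))⁻¹)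
    (ϕw : ℝ → ℝ) (hϕ : ϕw = fun x => Real.exp (lam * ψ x) - Real.exp (lam * K))
    (r ρ : ℝ → ℝ → ℝ → ℝ)
    (hr : r = fun τ t x => Real.exp (τ * θ t * ϕw x))
    (hρ : ρ = fun τ t x => Real.exp (-(τ * θ t) * ϕw x)) :
    ∀ α : ℕ, ∃ C : ℝ, 0 < C ∧
      ∀ τ : ℝ, 1 ≤ τ → ∀ t ∈ Set.Icc (0 : ℝ) T, ∀ x ∈ Set.Icc (0 : ℝ) 1,
        |deriv (fun t' => r τ t' x * iteratedDeriv α (fun z => ρ τ t' z) x) t|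
            ≤ C * (τ * θ t) ^ α * T * θ t
        ∧ |deriv (fun t' => ρ τ t' x * iteratedDeriv α (fun z => r τ t' z) x) t|
            ≤ C * (τ * θ t) ^ α * T * θ t := by
  intro α
  -- smoothness of the weight in space
  have hϕw : ContDiff ℝ ∞ ϕw := by
    rw [hϕ]
    exact (Real.contDiff_exp.comp (contDiff_const.mul (hψ.of_le (by simp)))).sub contDiff_const
  have hϕm : ContDiff ℝ ∞ (fun x => -ϕw x) := hϕw.neg
  obtain ⟨p, hp, hpv, hpf⟩ := structLemma (fun x => -ϕw x) hϕm α
  obtain ⟨q, hq, hqv, hqf⟩ := structLemma ϕw hϕw α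
  -- a uniform bound on the coefficients on [0,1]
  have hgc : Continuous (fun x => ∑ k ∈ range (α+1), (|p k x| + |q k x|)) := by
    apply continuous_finset_sum
    intro k _
    exact ((hp k).continuous.abs).add ((hq k).continuous.abs)
  obtain ⟨M, hM⟩ := (isCompact_Icc : IsCompact (Set.Icc (0:ℝ) 1)).exists_bound_of_continuousOn
    hgc.continuousOn
  have hMb : ∀ k ∈ range (α+1), ∀ x ∈ Set.Icc (0:ℝ) 1, |p k x| ≤ M ∧ |q k x| ≤ M := by
    intro k hk x hx
    have h1 : |p k x| + |q k x| ≤ ∑ j ∈ range (α+1), (|p j x| + |q j x|) :=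
      Finset.single_le_sum (f := fun j => |p j x| + |q j x|) (fun j _ => by positivity) hk
    have h2 : ∑ j ∈ range (α+1), (|p j x| + |q j x|) ≤ M := by
      have := hM x hx
      rw [Real.norm_eq_abs] at this
      exact (le_abs_self _).trans this
    constructor <;> nlinarith [abs_nonneg (p k x), abs_nonneg (q k x)]
  have hM0 : 0 ≤ M := by
    have := hM 0 ⟨le_refl 0, zero_le_one⟩
    exact (norm_nonneg _).trans this
  -- constants
  have hTa0 : (0:ℝ) < T + a0 := by linarith
  set m : ℝ := ((T + a0) * (T + a0))⁻¹ with hm_def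
  have hm0 : 0 < m := by positivity
  set c : ℝ := min m 1 with hc_def
  have hc0 : 0 < c := lt_min hm0 one_pos
  set B : ℝ := c⁻¹ with hB_def
  have hB1 : 1 ≤ B := (one_le_inv₀ hc0).mpr (min_le_right m 1)
  have hB0 : 0 < B := by positivity
  refine ⟨((α:ℝ)+1) * ((α:ℝ)+1) * (M+1) * B^α, ?_, ?_⟩
  · have h1 : (0:ℝ) < M + 1 := by linarith
    have h2 : (0:ℝ) < ((α:ℝ)+1) := by positivity
    have h3 : (0:ℝ) < B^α := pow_pos hB0 α
    exact mul_pos (mul_pos (mul_pos h2 h2) h1) h3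
  intro τ hτ t ht x hx
  obtain ⟨ht0, htT⟩ := ht
  -- basic facts about θ at t
  have hP : 0 < (t + a0) * (T + a0 - t) := by nlinarith
  have hθt : θ t = ((t + a0) * (T + a0 - t))⁻¹ := by rw [hθ]
  have hθpos : 0 < θ t := by rw [hθt]; positivity
  have hmθ : m ≤ θ t := by
    rw [hθt, hm_def]
    apply inv_anti₀ hP
    nlinarith
  have hcs : c ≤ τ * θ t := by
    have h1 : θ t ≤ τ * θ t := le_mul_of_one_le_left hθpos.le hτ
    have := min_le_left m 1
    linarith [hmθ]
  have hst0 : 0 < τ * θ t := by nlinarith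
  have hτ0 : 0 < τ := lt_of_lt_of_le one_pos hτ
  -- derivative of θ
  have hPd : HasDerivAt (fun u => (u + a0) * (T + a0 - u))
      (1 * (T + a0 - t) + (t + a0) * (-1)) t :=
    ((hasDerivAt_id t).add_const a0).mul ((hasDerivAt_id t).const_sub (T + a0))
  have hθd : HasDerivAt θ
      (-(1 * (T + a0 - t) + (t + a0) * (-1)) / ((t + a0) * (T + a0 - t))^2) t := by
    rw [hθ]; exact hPd.inv hP.ne'
  have hDabs : |deriv θ t| ≤ T * θ t ^ 2 := by
    rw [hθd.deriv, hθt]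
    rw [abs_div, abs_neg]
    have h1 : |1 * (T + a0 - t) + (t + a0) * (-1)| ≤ T := by
      rw [abs_le]; constructor <;> nlinarith
    have h2 : |((t + a0) * (T + a0 - t))^2| = ((t + a0) * (T + a0 - t))^2 := abs_of_pos (by positivity)
    rw [h2]
    rw [div_le_iff₀ (by positivity)]
    have h3 : T * (((t + a0) * (T + a0 - t))⁻¹)^2 * ((t + a0) * (T + a0 - t))^2 = T := by
      have hne1 : T + a0 - t ≠ 0 := by linarith
      have hne2 : t + a0 ≠ 0 := by linarith
      field_simp
    rw [h3]
    exact h1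
  -- power comparison
  have hpow : ∀ k, k ≤ α → (τ * θ t)^k ≤ B^α * (τ * θ t)^α := by
    intro k hk
    have h1 : (τ * θ t)^k * c^(α - k) ≤ (τ * θ t)^α := by
      have h2 : c^(α-k) ≤ (τ * θ t)^(α-k) := pow_le_pow_left₀ hc0.le hcs (α - k)
      calc (τ * θ t)^k * c^(α-k) ≤ (τ * θ t)^k * (τ * θ t)^(α-k) := by
            apply mul_le_mul_of_nonneg_left h2 (by positivity)
        _ = (τ * θ t)^α := by rw [← pow_add, Nat.add_sub_cancel' hk]
    have h3 : (τ * θ t)^k ≤ (τ * θ t)^α / c^(α-k) := by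
      rw [le_div_iff₀ (by positivity)]
      exact h1
    calc (τ * θ t)^k ≤ (τ * θ t)^α / c^(α-k) := h3
      _ = (τ * θ t)^α * B^(α-k) := by rw [div_eq_mul_inv, ← inv_pow]
      _ ≤ (τ * θ t)^α * B^α := by
          apply mul_le_mul_of_nonneg_left (pow_le_pow_right₀ hB1 (Nat.sub_le α k)) (by positivity)
      _ = B^α * (τ * θ t)^α := by ring
  -- the main estimate for a sum with bounded coefficients
  have key : ∀ w : ℕ → ℝ, (∀ k ∈ range (α+1), |w k| ≤ M) →
      |∑ k ∈ range (α+1), ((k:ℝ) * (τ * θ t)^(k-1) * (τ * deriv θ t)) * w k|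
        ≤ (((α:ℝ)+1) * ((α:ℝ)+1) * (M+1) * B^α) * (τ * θ t)^α * T * θ t := by
    intro w hw
    have hterm : ∀ k ∈ range (α+1),
        |((k:ℝ) * (τ * θ t)^(k-1) * (τ * deriv θ t)) * w k|
          ≤ ((α:ℝ)+1) * (M+1) * B^α * (τ * θ t)^α * T * θ t := by
      intro k hk
      have hkα : k ≤ α := by
        have := Finset.mem_range.mp hk; omega
      match k with
      | 0 =>
        simp only [Nat.cast_zero, zero_mul, abs_zero]
        have h1 : (0:ℝ) ≤ M + 1 := by linarith
        have h2 : (0:ℝ) ≤ ((α:ℝ)+1) := by positivity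
        have h3 : (0:ℝ) ≤ B^α := (pow_pos hB0 α).le
        have h4 : (0:ℝ) ≤ (τ * θ t)^α := (pow_pos hst0 α).le
        positivity
      | (j+1) =>
        have hjα : j + 1 ≤ α := hkα
        have hwk : |w (j+1)| ≤ M + 1 := le_trans (hw _ hk) (by linarith)
        have hkc : ((j+1 : ℕ):ℝ) ≤ (α:ℝ) + 1 := by
          have h := (Nat.cast_le (α := ℝ)).mpr hjα
          push_cast at h ⊢
          linarith
        calc |(((j+1:ℕ):ℝ) * (τ * θ t)^(j+1-1) * (τ * deriv θ t)) * w (j+1)|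
            = ((j+1:ℕ):ℝ) * (τ * θ t)^j * (τ * |deriv θ t|) * |w (j+1)| := by
              rw [abs_mul, abs_mul, abs_mul, abs_mul]
              rw [abs_of_nonneg (by positivity : (0:ℝ) ≤ ((j+1:ℕ):ℝ)),
                abs_of_pos (pow_pos hst0 _), abs_of_pos hτ0]
              norm_num
          _ ≤ ((α:ℝ)+1) * (τ * θ t)^j * (τ * (T * θ t ^ 2)) * (M+1) := by
              gcongr
          _ = ((α:ℝ)+1) * (M+1) * ((τ * θ t)^(j+1)) * T * θ t := by ring
          _ ≤ ((α:ℝ)+1) * (M+1) * (B^α * (τ * θ t)^α) * T * θ t := by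
              have := hpow (j+1) hjα
              gcongr
          _ = ((α:ℝ)+1) * (M+1) * B^α * (τ * θ t)^α * T * θ t := by ring
    calc |∑ k ∈ range (α+1), ((k:ℝ) * (τ * θ t)^(k-1) * (τ * deriv θ t)) * w k|
        ≤ ∑ k ∈ range (α+1), |((k:ℝ) * (τ * θ t)^(k-1) * (τ * deriv θ t)) * w k| :=
          Finset.abs_sum_le_sum_abs _ _
      _ ≤ ∑ _k ∈ range (α+1), ((α:ℝ)+1) * (M+1) * B^α * (τ * θ t)^α * T * θ t :=
          Finset.sum_le_sum hterm
      _ = ((α:ℝ)+1) * (((α:ℝ)+1) * (M+1) * B^α * (τ * θ t)^α * T * θ t) := by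
          rw [Finset.sum_const, Finset.card_range, nsmul_eq_mul]
          push_cast; ring
      _ = (((α:ℝ)+1) * ((α:ℝ)+1) * (M+1) * B^α) * (τ * θ t)^α * T * θ t := by ring
  -- rewriting the two functions as polynomials in τθ(t)
  have hfun1 : (fun t' => r τ t' x * iteratedDeriv α (fun z => ρ τ t' z) x)
      = fun t' => ∑ k ∈ range (α+1), (τ * θ t')^k * p k x := by
    funext t'
    have e1 : (fun z => ρ τ t' z) = fun z => Real.exp ((τ * θ t') * (-ϕw z)) := by
      simp only [hρ]
      funext z
      congr 1
      ring
    simp only [hr, e1, hpf (τ * θ t') x]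
    have e2 : τ * θ t' * ϕw x + τ * θ t' * -ϕw x = 0 := by ring
    rw [mul_left_comm, ← Real.exp_add, e2, Real.exp_zero, mul_one]
  have hfun2 : (fun t' => ρ τ t' x * iteratedDeriv α (fun z => r τ t' z) x)
      = fun t' => ∑ k ∈ range (α+1), (τ * θ t')^k * q k x := by
    funext t'
    have e1 : (fun z => r τ t' z) = fun z => Real.exp ((τ * θ t') * ϕw z) := by
      simp only [hr]
    simp only [hρ, e1, hqf (τ * θ t') x]
    have e2 : -(τ * θ t') * ϕw x + τ * θ t' * ϕw x = 0 := by ring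
    rw [mul_left_comm, ← Real.exp_add, e2, Real.exp_zero, mul_one]
  -- differentiate the polynomial
  have hsd : HasDerivAt (fun t' => τ * θ t') (τ * deriv θ t) t := by
    rw [hθd.deriv]; exact hθd.const_mul τ
  have hder : ∀ w : ℕ → ℝ, HasDerivAt (fun t' => ∑ k ∈ range (α+1), (τ * θ t')^k * w k)
      (∑ k ∈ range (α+1), ((k:ℝ) * (τ * θ t)^(k-1) * (τ * deriv θ t)) * w k) t := by
    intro w
    apply HasDerivAt.fun_sum
    intro k _
    exact (hsd.pow k).mul_const _
  constructor
  · rw [hfun1, (hder (fun k => p k x)).deriv]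
    exact key _ (fun k hk => (hMb k hk x hx).1)
  · rw [hfun2, (hder (fun k => q k x)).deriv]
    exact key _ (fun k hk => (hMb k hk x hx).2)
end

section
/- For every α, β, δ ∈ ℕ, i ∈ {1,2}, and λ ≥ 1 there exists C = C(λ, α, β, δ, ψ_i, K) such that for all τ ≥ 1, t ∈ [0,T] and x: |∂_x^δ( r_i²·(∂_x^α ρ_i)·(∂_x^β ρ_i) )(t,x) − (α+β)^δ(−s(t)φ_i(x))^{α+β} λ^{α+β+δ} (ψ_i'(x))^{α+β+δ}| ≤ C( δ(α+β)·(s(t)φ_i(x))^{α+β}·λ^{α+β+δ−1} + (α(α−1)+β(β−1))·s(t)^{α+β−1} ); in particular |∂_x^δ( r_i²·(∂_x^α ρ_i)·(∂_x^β ρ_i) )| ≤ C·s(t)^{α+β}. -/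
open Real

open ContDiff

namespace Stmt4Aux

lemma _root_.ContDiff.diffble {f : ℝ → ℝ} (h : ContDiff ℝ ∞ f) : Differentiable ℝ f :=
  h.differentiable (by simp)

noncomputable def Q (c : ℝ → ℝ) : ℕ → ℕ → ℝ → ℝ
  | 0, 0 => fun _ => 1
  | 0, _+1 => fun _ => 0
  | n+1, 0 => deriv (Q c n 0)
  | n+1, j+1 => fun x => deriv (Q c n (j+1)) x - c x * Q c n j x

variable {c : ℝ → ℝ}

lemma Q_contDiff (hc : ContDiff ℝ ∞ c) : ∀ n j, ContDiff ℝ ∞ (Q c n j) := by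
  intro n
  induction n with
  | zero =>
    intro j
    cases j with
    | zero => exact contDiff_const
    | succ j => exact contDiff_const
  | succ n ih =>
    intro j; cases j with
    | zero => exact (contDiff_infty_iff_deriv.mp (ih 0)).2
    | succ j =>
      exact ((contDiff_infty_iff_deriv.mp (ih (j+1))).2).sub (hc.mul (ih j))

lemma Q_zero_of_lt (c : ℝ → ℝ) : ∀ n j, n < j → Q c n j = fun _ => 0 := by
  intro n
  induction n with
  | zero =>
    intro j hj
    match j, hj with
    | (j+1), _ => rfl
  | succ n ih =>
    intro j hj
    match j, hj with
    | (j+1), hj =>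
      show (fun x => deriv (Q c n (j+1)) x - c x * Q c n j x) = fun _ => 0
      rw [ih (j+1) (by omega), ih j (by omega)]
      funext x; simp

lemma Q_diag (c : ℝ → ℝ) : ∀ n, Q c n n = fun x => (-c x) ^ n := by
  intro n
  induction n with
  | zero => funext x; simp [Q]
  | succ n ih =>
    show (fun x => deriv (Q c n (n+1)) x - c x * Q c n n x) = _
    rw [Q_zero_of_lt c n (n+1) (by omega), ih]
    funext x; simp [pow_succ]; ring

lemma Q_one_zero (c : ℝ → ℝ) : Q c 1 0 = fun _ => 0 := by
  show deriv (Q c 0 0) = _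
  show deriv (fun _ => (1:ℝ)) = _
  simp [deriv_const']

noncomputable def P (c : ℝ → ℝ) (s : ℝ) (n : ℕ) : ℝ → ℝ :=
  fun x => ∑ j ∈ Finset.range (n+1), s ^ j * Q c n j x

lemma P_contDiff (hc : ContDiff ℝ ∞ c) (s : ℝ) (n : ℕ) : ContDiff ℝ ∞ (P c s n) := by
  apply ContDiff.sum
  intro j _
  exact contDiff_const.mul (Q_contDiff hc n j)

lemma P_succ (hc : ContDiff ℝ ∞ c) (s : ℝ) (n : ℕ) (x : ℝ) :
    P c s (n+1) x = deriv (P c s n) x + (-s * c x) * P c s n x := by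
  have hd : deriv (P c s n) x = ∑ j ∈ Finset.range (n+1), s ^ j * deriv (Q c n j) x := by
    have : ∀ j ∈ Finset.range (n+1), HasDerivAt (fun y => s ^ j * Q c n j y)
        (s ^ j * deriv (Q c n j) x) x := by
      intro j _
      exact (((Q_contDiff hc n j).diffble x).hasDerivAt).const_mul _
    exact (HasDerivAt.fun_sum this).deriv
  rw [hd]
  have h1 : P c s (n+1) x
      = s ^ 0 * Q c (n+1) 0 x + ∑ j ∈ Finset.range (n+1), s ^ (j+1) * Q c (n+1) (j+1) x := by
    rw [P, Finset.sum_range_succ']; ring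
  rw [h1]
  have h2 : Q c (n+1) 0 x = deriv (Q c n 0) x := rfl
  have h3 : ∀ j, Q c (n+1) (j+1) x = deriv (Q c n (j+1)) x - c x * Q c n j x := fun j => rfl
  simp only [h2, h3]
  have h4 : ∑ j ∈ Finset.range (n+1), s ^ (j+1) * (deriv (Q c n (j+1)) x - c x * Q c n j x)
      = (∑ j ∈ Finset.range (n+1), s ^ (j+1) * deriv (Q c n (j+1)) x)
        - c x * s * ∑ j ∈ Finset.range (n+1), s ^ j * Q c n j x := by
    rw [Finset.mul_sum, ← Finset.sum_sub_distrib]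
    apply Finset.sum_congr rfl
    intro j _; ring
  rw [h4]
  have h5 : ∑ j ∈ Finset.range (n+1), s ^ j * deriv (Q c n j) x
      = deriv (Q c n 0) x + ∑ j ∈ Finset.range n, s ^ (j+1) * deriv (Q c n (j+1)) x := by
    rw [Finset.sum_range_succ']; ring
  have h6 : ∑ j ∈ Finset.range (n+1), s ^ (j+1) * deriv (Q c n (j+1)) x
      = ∑ j ∈ Finset.range n, s ^ (j+1) * deriv (Q c n (j+1)) x := by
    rw [Finset.sum_range_succ, Q_zero_of_lt c n (n+1) (by omega)]
    simp [deriv_const']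
  rw [h6, P]
  rw [h5]
  ring

lemma iteratedDeriv_exp_eq (hc : ContDiff ℝ ∞ c) (w : ℝ → ℝ) (hw : ContDiff ℝ ∞ w)
    (hwc : deriv w = c) (s : ℝ) :
    ∀ n, iteratedDeriv n (fun x => Real.exp (-s * w x))
      = fun x => P c s n x * Real.exp (-s * w x) := by
  have hwd : Differentiable ℝ w := hw.diffble
  intro n
  induction n with
  | zero =>
    funext x
    simp [iteratedDeriv_zero, P, Q]
  | succ n ih =>
    rw [iteratedDeriv_succ, ih]
    funext x
    have hPd : HasDerivAt (P c s n) (deriv (P c s n) x) x :=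
      ((P_contDiff hc s n).diffble x).hasDerivAt
    have hEd : HasDerivAt (fun y => Real.exp (-s * w y)) ((-s * c x) * Real.exp (-s * w x)) x := by
      have h1 : HasDerivAt (fun y => -s * w y) (-s * c x) x := by
        simpa [hwc] using ((hwd x).hasDerivAt).const_mul (-s)
      simpa [mul_comm] using h1.exp
    have := (hPd.fun_mul hEd).deriv
    rw [this, P_succ hc s n x]
    ring

lemma iteratedDeriv_fun_const (n : ℕ) (a : ℝ) :
    iteratedDeriv n (fun _ : ℝ => a) = fun _ => if n = 0 then a else 0 := by
  induction n with
  | zero => simp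
  | succ n ih =>
    rw [iteratedDeriv_succ, ih]
    cases n <;> simp [deriv_const']

lemma iteratedDeriv_fun_add {f g : ℝ → ℝ} (hf : ContDiff ℝ ∞ f) (hg : ContDiff ℝ ∞ g)
    (n : ℕ) (x : ℝ) :
    iteratedDeriv n (fun y => f y + g y) x = iteratedDeriv n f x + iteratedDeriv n g x := by
  have : (fun y => f y + g y) = f + g := rfl
  rw [this, ← iteratedDerivWithin_univ, ← iteratedDerivWithin_univ, ← iteratedDerivWithin_univ]
  exact iteratedDerivWithin_add (Set.mem_univ x) uniqueDiffOn_univ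
    ((hf.of_le (by exact_mod_cast le_top)).contDiffWithinAt)
    ((hg.of_le (by exact_mod_cast le_top)).contDiffWithinAt)

lemma iteratedDeriv_fun_sum {ι : Type*} [DecidableEq ι] (u : Finset ι) (f : ι → ℝ → ℝ)
    (hf : ∀ i ∈ u, ContDiff ℝ ∞ (f i)) (n : ℕ) (x : ℝ) :
    iteratedDeriv n (fun y => ∑ i ∈ u, f i y) x = ∑ i ∈ u, iteratedDeriv n (f i) x := by
  induction u using Finset.induction with
  | empty => simp [iteratedDeriv_fun_const]
  | @insert a u ha ih =>
    have h1 : (fun y => ∑ i ∈ insert a u, f i y) = fun y => f a y + ∑ i ∈ u, f i y := by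
      funext y; rw [Finset.sum_insert ha]
    rw [h1, iteratedDeriv_fun_add (hf a (Finset.mem_insert_self a u))
      (ContDiff.sum fun i hi => hf i (Finset.mem_insert_of_mem hi)),
      Finset.sum_insert ha, ih (fun i hi => hf i (Finset.mem_insert_of_mem hi))]

lemma iteratedDeriv_fun_const_mul {f : ℝ → ℝ} (hf : ContDiff ℝ ∞ f) (a : ℝ) (n : ℕ) (x : ℝ) :
    iteratedDeriv n (fun y => a * f y) x = a * iteratedDeriv n f x := by
  rw [← iteratedDerivWithin_univ, ← iteratedDerivWithin_univ]
  have := iteratedDerivWithin_const_smul (𝕜 := ℝ) (s := Set.univ) (x := x) (n := n) (f := f)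
    (Set.mem_univ x) uniqueDiffOn_univ a ((hf.of_le (by exact_mod_cast le_top)).contDiffWithinAt)
  simpa [smul_eq_mul] using this

lemma nat_mul_sub_one_nonneg (n : ℕ) : 0 ≤ (n : ℝ) * ((n : ℝ) - 1) := by
  rcases n with _ | n
  · simp
  · push_cast
    have : (0:ℝ) ≤ n := by positivity
    nlinarith

lemma pow_le_pow_helper {s s0 : ℝ} (h0 : 0 < s0) (hs : s0 ≤ s) {i n : ℕ} (hin : i ≤ n) :
    s ^ i ≤ s ^ n * (max 1 s0⁻¹) ^ n := by
  have hspos : 0 < s := lt_of_lt_of_le h0 hs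
  have h1 : s ^ i * s0 ^ (n - i) ≤ s ^ n := by
    calc s ^ i * s0 ^ (n - i) ≤ s ^ i * s ^ (n - i) := by
          apply mul_le_mul_of_nonneg_left (pow_le_pow_left₀ h0.le hs _) (by positivity)
      _ = s ^ n := by rw [← pow_add]; congr 1; omega
  have h2 : s ^ i ≤ s ^ n * (s0⁻¹) ^ (n - i) := by
    rw [inv_pow, ← div_eq_mul_inv (s ^ n) (s0 ^ (n-i)), le_div_iff₀ (by positivity)]
    linarith
  calc s ^ i ≤ s ^ n * (s0⁻¹) ^ (n - i) := h2
    _ ≤ s ^ n * (max 1 s0⁻¹) ^ (n - i) := by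
        apply mul_le_mul_of_nonneg_left _ (by positivity)
        exact pow_le_pow_left₀ (by positivity) (le_max_right _ _) _
    _ ≤ s ^ n * (max 1 s0⁻¹) ^ n := by
        apply mul_le_mul_of_nonneg_left _ (by positivity)
        exact pow_le_pow_right₀ (le_max_left _ _) (by omega)

lemma exists_bound (g : ℝ → ℝ) (hg : Continuous g) :
    ∃ C : ℝ, 0 ≤ C ∧ ∀ x ∈ Set.Icc (0:ℝ) 1, |g x| ≤ C := by
  obtain ⟨x0, hx0mem, hx0⟩ := isCompact_Icc.exists_isMaxOn
    (Set.nonempty_Icc.mpr (by norm_num : (0:ℝ) ≤ 1)) (hg.abs.continuousOn)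
  exact ⟨|g x0|, abs_nonneg _, hx0⟩

end Stmt4Aux

open Stmt4Aux

set_option maxHeartbeats 2000000 in
/-- Estimates for `∂_x^δ (r² (∂_x^α ρ)(∂_x^β ρ))` for the Carleman weight functions:
the leading term is `(α+β)^δ (-sφ)^{α+β} λ^{α+β+δ} (ψ')^{α+β+δ}` and the remainder is
`O(δ(α+β) (sφ)^{α+β} λ^{α+β+δ-1} + (α(α-1)+β(β-1)) s^{α+β-1})`; in particular the whole
quantity is `O_λ(s^{α+β})`.  Here `θ(t) = ((t+α₀)(T+α₀-t))⁻¹`, `s = τθ`, `φ = e^{λψ}`,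
`ϕ = e^{λψ} - e^{λK}`, `r = e^{sϕ}`, `ρ = r⁻¹`. -/
theorem stmt4 (T a0 : ℝ) (hT : 0 < T) (ha0 : 0 < a0) (ha0T : a0 < T)
    (ψ : ℝ → ℝ) (hψ : ContDiff ℝ (⊤ : ℕ∞) ψ)
    (lam K : ℝ) (hlam : 1 ≤ lam) (hK : ∀ x ∈ Set.Icc (0 : ℝ) 1, |ψ x| < K)
    (θ : ℝ → ℝ) (hθ : θ = fun t => ((t + a0) * (T + a0 - t))⁻¹)
    (φ : ℝ → ℝ) (hφ : φ = fun x => Real.exp (lam * ψ x))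
    (ϕw : ℝ → ℝ) (hϕ : ϕw = fun x => Real.exp (lam * ψ x) - Real.exp (lam * K))
    (r ρ : ℝ → ℝ → ℝ → ℝ)
    (hr : r = fun τ t x => Real.exp (τ * θ t * ϕw x))
    (hρ : ρ = fun τ t x => Real.exp (-(τ * θ t) * ϕw x)) :
    ∀ α β δ : ℕ, ∃ C : ℝ, 0 < C ∧
      ∀ τ : ℝ, 1 ≤ τ → ∀ t ∈ Set.Icc (0 : ℝ) T, ∀ x ∈ Set.Icc (0 : ℝ) 1,
        (|iteratedDeriv δ
            (fun y => (r τ t y) ^ 2 * iteratedDeriv α (fun z => ρ τ t z) y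
              * iteratedDeriv β (fun z => ρ τ t z) y) x
          - ((α : ℝ) + β) ^ δ * (-(τ * θ t * φ x)) ^ (α + β) * lam ^ (α + β + δ)
              * (deriv ψ x) ^ (α + β + δ)|
          ≤ C * ((δ : ℝ) * ((α : ℝ) + β) * (τ * θ t * φ x) ^ (α + β) * lam ^ (α + β + δ - 1)
              + ((α : ℝ) * ((α : ℝ) - 1) + (β : ℝ) * ((β : ℝ) - 1)) * (τ * θ t) ^ (α + β - 1)))
        ∧ |iteratedDeriv δ
            (fun y => (r τ t y) ^ 2 * iteratedDeriv α (fun z => ρ τ t z) y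
              * iteratedDeriv β (fun z => ρ τ t z) y) x|
            ≤ C * (τ * θ t) ^ (α + β) := by
  -- basic smoothness setup
  have hpsm : ContDiff ℝ ∞ ψ := hψ.of_le (by simp)
  set c : ℝ → ℝ := fun x => lam * deriv ψ x * Real.exp (lam * ψ x) with hcdef
  have hψd : ContDiff ℝ ∞ (deriv ψ) := (contDiff_infty_iff_deriv.mp hpsm).2
  have hc : ContDiff ℝ ∞ c := (contDiff_const.mul hψd).mul ((contDiff_const.mul hpsm).exp)
  have hphm : ContDiff ℝ ∞ ϕw := by
    rw [hϕ]; exact ((contDiff_const.mul hpsm).exp).sub contDiff_const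
  have hderiv : deriv ϕw = c := by
    funext x
    have h1 : HasDerivAt (fun y => lam * ψ y) (lam * deriv ψ x) x :=
      ((hpsm.diffble x).hasDerivAt).const_mul lam
    have h2 : HasDerivAt (fun y => Real.exp (lam * ψ y) - Real.exp (lam * K))
        (Real.exp (lam * ψ x) * (lam * deriv ψ x)) x := (h1.exp).sub_const _
    rw [hϕ, h2.deriv]
    simp only [hcdef]; ring
  -- θ bounds
  set s0 : ℝ := ((T + a0) * (T + a0))⁻¹ with hs0def
  have hTa0 : 0 < T + a0 := by linarith
  have hs0pos : 0 < s0 := by positivity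
  have hθge : ∀ t ∈ Set.Icc (0:ℝ) T, s0 ≤ θ t ∧ 0 < θ t := by
    intro t ht
    obtain ⟨ht0, htT⟩ := ht
    have hp1 : 0 < t + a0 := by linarith
    have hp2 : 0 < T + a0 - t := by linarith
    have hprod : 0 < (t + a0) * (T + a0 - t) := mul_pos hp1 hp2
    have hle : (t + a0) * (T + a0 - t) ≤ (T + a0) * (T + a0) := by nlinarith
    constructor
    · rw [hθ]
      exact inv_anti₀ hprod hle
    · rw [hθ]
      positivity
  intro α β δ
  -- the family of coefficient functions appearing in the expansion
  set S : Finset (ℕ × ℕ) := Finset.range (α+1) ×ˢ Finset.range (β+1) with hS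
  set D : ℕ × ℕ → ℝ → ℝ :=
    fun p => iteratedDeriv δ (fun y => Q c α p.1 y * Q c β p.2 y) with hD
  have hQQc : ∀ p : ℕ × ℕ, ContDiff ℝ ∞ (fun y => Q c α p.1 y * Q c β p.2 y) :=
    fun p => (Q_contDiff hc α p.1).mul (Q_contDiff hc β p.2)
  have hDcont : ∀ p, Continuous (D p) :=
    fun p => ContDiff.continuous_iteratedDeriv δ (hQQc p) (by exact_mod_cast le_top)
  obtain ⟨CD, hCD0, hCDraw⟩ := exists_bound (fun x => ∑ p ∈ S, |D p x|)
    (continuous_finset_sum _ (fun p _ => (hDcont p).abs))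
  have hCD : ∀ x ∈ Set.Icc (0:ℝ) 1, ∑ p ∈ S, |D p x| ≤ CD := by
    intro x hx
    have hnn : 0 ≤ ∑ q ∈ S, |D q x| := Finset.sum_nonneg fun q _ => abs_nonneg _
    have h1 := hCDraw x hx
    rwa [abs_of_nonneg hnn] at h1
  set E : ℝ → ℝ :=
    fun x => D (α, β) x - ((α+β : ℕ):ℝ)^δ * (lam * deriv ψ x)^δ * (-c x)^(α+β) with hE
  have hEcont : Continuous E := (hDcont (α,β)).sub
    ((continuous_const.mul ((continuous_const.mul hψd.continuous).pow δ)).mul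
      ((hc.continuous.neg).pow (α+β)))
  obtain ⟨CE, hCE0, hCE⟩ := exists_bound E hEcont
  have hQdiagfun : (fun y => Q c α α y * Q c β β y) = fun y => (-c y)^(α+β) := by
    rw [Q_diag, Q_diag]; funext y; rw [← pow_add]
  -- degenerate cases
  have hEzero : δ * (α + β) = 0 → ∀ x : ℝ, E x = 0 := by
    intro h0 x
    rcases Nat.mul_eq_zero.mp h0 with hδ | hm0
    · subst hδ
      have hQdx : Q c α α x * Q c β β x = (-c x)^(α+β) := congrFun hQdiagfun x
      simp only [hE, hD, iteratedDeriv_zero, pow_zero, one_mul]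
      rw [hQdx]
      ring
    · have hα : α = 0 := by omega
      have hβ : β = 0 := by omega
      subst hα; subst hβ
      have h1 : (fun y => (-c y)^(0+0)) = fun _ : ℝ => (1:ℝ) := by funext y; simp
      simp only [hE, hD, hQdiagfun, h1, iteratedDeriv_fun_const]
      cases δ <;> simp
  have hDvanish : α ≤ 1 → β ≤ 1 → ∀ p ∈ S.erase (α, β), ∀ x : ℝ, D p x = 0 := by
    intro hα hβ p hp x
    obtain ⟨hpne, hpmem⟩ := Finset.mem_erase.mp hp
    rw [hS, Finset.mem_product, Finset.mem_range, Finset.mem_range] at hpmem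
    obtain ⟨hm1, hm2⟩ := hpmem
    have hcase : p.1 < α ∨ p.2 < β := by
      by_contra hcon
      push_neg at hcon
      apply hpne
      have h1 : p.1 = α := by omega
      have h2 : p.2 = β := by omega
      exact Prod.ext h1 h2
    have hfun0 : (fun y => Q c α p.1 y * Q c β p.2 y) = fun _ : ℝ => (0:ℝ) := by
      rcases hcase with h | h
      · have hq : Q c α p.1 = fun _ => 0 := by
          rw [show α = 1 by omega, show p.1 = 0 by omega]; exact Q_one_zero c
        funext y; rw [hq]; simp
      · have hq : Q c β p.2 = fun _ => 0 := by
          rw [show β = 1 by omega, show p.2 = 0 by omega]; exact Q_one_zero c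
        funext y; rw [hq]; simp
    simp only [hD, hfun0, iteratedDeriv_fun_const]
    cases δ <;> simp
  -- the constant
  set K1 : ℝ := (max 1 s0⁻¹) ^ (α+β) with hK1
  set K1' : ℝ := (max 1 s0⁻¹) ^ (α+β-1) with hK1'
  have hK1pos : 0 < K1 := by positivity
  have hK1'pos : 0 < K1' := by positivity
  set Cexp : ℝ := Real.exp (lam * K) ^ (α+β) with hCexp
  have hCexppos : 0 < Cexp := by positivity
  set C : ℝ := (CE + 1) * Cexp + ((S.card : ℝ) * CD * K1' + 1) + (CD * K1 + 1) with hCdef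
  have hCpos : 0 < C := by
    have h1 : 0 < (CE + 1) * Cexp := mul_pos (by linarith) hCexppos
    have h2 : 0 ≤ (S.card : ℝ) * CD * K1' := by positivity
    have h3 : 0 ≤ CD * K1 := by positivity
    linarith
  refine ⟨C, hCpos, ?_⟩
  intro τ hτ t ht x hx
  obtain ⟨hθts0, hθtpos⟩ := hθge t ht
  set s : ℝ := τ * θ t with hsdef
  have hspos : 0 < s := mul_pos (lt_of_lt_of_le one_pos hτ) hθtpos
  have hs0s : s0 ≤ s := le_trans hθts0 (le_mul_of_one_le_left hθtpos.le hτ)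
  -- iterated derivatives of ρ
  have hiter : ∀ n : ℕ, iteratedDeriv n (fun z => ρ τ t z)
      = fun y => P c s n y * Real.exp (-s * ϕw y) := by
    intro n
    have h1 : (fun z => ρ τ t z) = fun z => Real.exp (-s * ϕw z) := by
      simp only [hρ, hsdef]
    rw [h1]
    exact iteratedDeriv_exp_eq hc ϕw hphm hderiv s n
  -- the function under the δ-th derivative
  have hbig : (fun y => (r τ t y) ^ 2 * iteratedDeriv α (fun z => ρ τ t z) y
        * iteratedDeriv β (fun z => ρ τ t z) y)
      = fun y => ∑ p ∈ S, s^(p.1+p.2) * (Q c α p.1 y * Q c β p.2 y) := by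
    funext y
    rw [hiter α, hiter β]
    simp only [hr, hsdef]
    have hPP : P c s α y * P c s β y
        = ∑ p ∈ S, s^(p.1+p.2) * (Q c α p.1 y * Q c β p.2 y) := by
      rw [hS, Finset.sum_product, P, P, Finset.sum_mul_sum]
      apply Finset.sum_congr rfl; intro j _
      apply Finset.sum_congr rfl; intro k _
      rw [pow_add]; ring
    rw [← hPP]
    have e1 : Real.exp (-s * ϕw y) = (Real.exp (s * ϕw y))⁻¹ := by
      rw [← Real.exp_neg]; congr 1; ring
    rw [e1]
    have hne : Real.exp (s * ϕw y) ≠ 0 := Real.exp_ne_zero _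
    field_simp
    rw [hsdef]; ring_nf
  have hID : iteratedDeriv δ (fun y => (r τ t y) ^ 2 * iteratedDeriv α (fun z => ρ τ t z) y
        * iteratedDeriv β (fun z => ρ τ t z) y) x
      = ∑ p ∈ S, s^(p.1+p.2) * D p x := by
    rw [hbig, iteratedDeriv_fun_sum S _ (fun p _ => contDiff_const.mul (hQQc p)) δ x]
    apply Finset.sum_congr rfl
    intro p _
    rw [iteratedDeriv_fun_const_mul (hQQc p) _ δ x]
  have hmemS : (α, β) ∈ S := by
    rw [hS, Finset.mem_product]
    constructor <;> simp
  have hsplit : ∑ p ∈ S, s^(p.1+p.2) * D p x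
      = s^(α+β) * D (α,β) x + ∑ p ∈ S.erase (α,β), s^(p.1+p.2) * D p x :=
    (Finset.add_sum_erase S (fun p => s^(p.1+p.2) * D p x) hmemS).symm
  -- the main-term identity
  have hMid : ((α:ℝ)+β)^δ * (-(s * φ x))^(α+β) * lam^(α+β+δ) * (deriv ψ x)^(α+β+δ)
      = s^(α+β) * (((α+β : ℕ):ℝ)^δ * (lam * deriv ψ x)^δ * (-c x)^(α+β)) := by
    have hφx' : φ x = Real.exp (lam * ψ x) := by rw [hφ]
    have hcx : c x = lam * deriv ψ x * Real.exp (lam * ψ x) := by rw [hcdef]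
    rw [hφx', hcx, neg_pow (lam * deriv ψ x * Real.exp (lam * ψ x)),
      neg_pow (s * Real.exp (lam * ψ x)), mul_pow s (Real.exp (lam * ψ x)),
      mul_pow (lam * deriv ψ x) (Real.exp (lam * ψ x)), mul_pow lam (deriv ψ x),
      pow_add lam (α+β) δ, pow_add (deriv ψ x) (α+β) δ]
    push_cast
    ring
  -- bound on φ: 1 ≤ φ x * exp(lam K)
  have hφx : (1:ℝ) ≤ φ x * Real.exp (lam * K) := by
    simp only [hφ]
    rw [← Real.exp_add]
    have h1 : |ψ x| < K := hK x hx
    have h2 : 0 ≤ lam * ψ x + lam * K := by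
      have : -K ≤ ψ x := by cases abs_lt.mp h1; linarith
      nlinarith
    calc (1:ℝ) = Real.exp 0 := by rw [Real.exp_zero]
      _ ≤ Real.exp (lam * ψ x + lam * K) := Real.exp_le_exp.mpr h2
  have hφxpos : 0 < φ x := by simp only [hφ]; positivity
  -- bound for off-diagonal sum
  have hRestBound : |∑ p ∈ S.erase (α,β), s^(p.1+p.2) * D p x|
      ≤ C * (((α:ℝ) * ((α:ℝ) - 1) + (β:ℝ) * ((β:ℝ) - 1)) * s ^ (α + β - 1)) := by
    have hBnn : 0 ≤ (α:ℝ) * ((α:ℝ) - 1) + (β:ℝ) * ((β:ℝ) - 1) :=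
      add_nonneg (nat_mul_sub_one_nonneg α) (nat_mul_sub_one_nonneg β)
    by_cases hαβ : α ≤ 1 ∧ β ≤ 1
    · have : ∑ p ∈ S.erase (α,β), s^(p.1+p.2) * D p x = 0 := by
        apply Finset.sum_eq_zero
        intro p hp
        rw [hDvanish hαβ.1 hαβ.2 p hp x, mul_zero]
      rw [this, abs_zero]
      exact mul_nonneg hCpos.le (mul_nonneg hBnn (pow_nonneg hspos.le _))
    · have hB1 : (1:ℝ) ≤ (α:ℝ) * ((α:ℝ) - 1) + (β:ℝ) * ((β:ℝ) - 1) := by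
        push_neg at hαβ
        rcases Nat.lt_or_ge α 2 with h | h
        · have hβ2 : 2 ≤ β := by omega
          have : (2:ℝ) ≤ (β:ℝ) := by exact_mod_cast hβ2
          have := nat_mul_sub_one_nonneg α
          nlinarith
        · have : (2:ℝ) ≤ (α:ℝ) := by exact_mod_cast h
          have := nat_mul_sub_one_nonneg β
          nlinarith
      have hterm : ∀ p ∈ S.erase (α,β), |s^(p.1+p.2) * D p x| ≤ s^(α+β-1) * K1' * CD := by
        intro p hp
        have hpS : p ∈ S := Finset.mem_of_mem_erase hp
        have hpne := (Finset.mem_erase.mp hp).1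
        have hple : p.1 + p.2 ≤ α + β - 1 := by
          have hmem := hpS
          rw [hS, Finset.mem_product, Finset.mem_range, Finset.mem_range] at hmem
          obtain ⟨h1, h2⟩ := hmem
          rcases Nat.lt_or_ge (p.1 + p.2) (α + β) with h | h
          · omega
          · exfalso
            apply hpne
            have ha' : p.1 = α := by omega
            have hb' : p.2 = β := by omega
            exact Prod.ext ha' hb'
        have hDb : |D p x| ≤ CD :=
          le_trans (Finset.single_le_sum (fun q _ => abs_nonneg (D q x)) hpS) (hCD x hx)
        rw [abs_mul, abs_pow, abs_of_pos hspos]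
        calc s^(p.1+p.2) * |D p x| ≤ (s^(α+β-1) * K1') * CD := by
              apply mul_le_mul (pow_le_pow_helper hs0pos hs0s hple) hDb (abs_nonneg _)
              positivity
          _ = s^(α+β-1) * K1' * CD := by ring
      calc |∑ p ∈ S.erase (α,β), s^(p.1+p.2) * D p x|
          ≤ ∑ p ∈ S.erase (α,β), |s^(p.1+p.2) * D p x| := Finset.abs_sum_le_sum_abs _ _
        _ ≤ ∑ _p ∈ S.erase (α,β), s^(α+β-1) * K1' * CD := Finset.sum_le_sum hterm
        _ = (S.erase (α,β)).card * (s^(α+β-1) * K1' * CD) := by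
            rw [Finset.sum_const, nsmul_eq_mul]
        _ ≤ (S.card : ℝ) * (s^(α+β-1) * K1' * CD) := by
            apply mul_le_mul_of_nonneg_right _ (by positivity)
            exact_mod_cast Finset.card_le_card (Finset.erase_subset _ _)
        _ ≤ C * (((α:ℝ) * ((α:ℝ) - 1) + (β:ℝ) * ((β:ℝ) - 1)) * s ^ (α + β - 1)) := by
            have hCge : (S.card : ℝ) * CD * K1' ≤ C := by
              have h1 : 0 < (CE + 1) * Cexp := mul_pos (by linarith) hCexppos
              have h3 : 0 ≤ CD * K1 := by positivity
              rw [hCdef]; linarith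
            have hsp : 0 < s^(α+β-1) := pow_pos hspos _
            have h1 : ((S.card : ℝ) * (s ^ (α + β - 1) * K1' * CD) : ℝ)
                = ((S.card : ℝ) * CD * K1') * s ^ (α + β - 1) := by ring
            rw [h1]
            calc ((S.card : ℝ) * CD * K1' : ℝ) * s ^ (α + β - 1)
                ≤ C * s ^ (α + β - 1) := mul_le_mul_of_nonneg_right hCge hsp.le
              _ ≤ (C * ((α:ℝ) * ((α:ℝ) - 1) + (β:ℝ) * ((β:ℝ) - 1))) * s ^ (α + β - 1) := by
                  apply mul_le_mul_of_nonneg_right _ hsp.le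
                  exact le_mul_of_one_le_right hCpos.le hB1
              _ = C * (((α:ℝ) * ((α:ℝ) - 1) + (β:ℝ) * ((β:ℝ) - 1)) * s ^ (α + β - 1)) := by
                  ring
  -- bound for the diagonal error
  have hEBound : s^(α+β) * |E x|
      ≤ C * ((δ:ℝ) * ((α:ℝ) + β) * (s * φ x) ^ (α + β) * lam ^ (α + β + δ - 1)) := by
    by_cases hδm : δ * (α + β) = 0
    · rw [hEzero hδm x, abs_zero, mul_zero]
      have : 0 ≤ (δ:ℝ) * ((α:ℝ) + β) := by positivity
      have h2 : 0 ≤ (s * φ x) ^ (α + β) := by positivity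
      positivity
    · have hδm1 : 1 ≤ δ * (α + β) := Nat.one_le_iff_ne_zero.mpr hδm
      have hδmR : (1:ℝ) ≤ (δ:ℝ) * ((α:ℝ) + β) := by
        have : ((1:ℕ):ℝ) ≤ ((δ * (α+β) : ℕ):ℝ) := by exact_mod_cast hδm1
        push_cast at this
        linarith
      have hlamp : (1:ℝ) ≤ lam ^ (α + β + δ - 1) := one_le_pow₀ hlam
      have hsm : s^(α+β) ≤ (s * φ x) ^ (α+β) * Cexp := by
        rw [hCexp, ← mul_pow]
        apply pow_le_pow_left₀ hspos.le
        nlinarith [Real.exp_pos (lam * K)]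
      have hEb : |E x| ≤ CE := hCE x hx
      have hCge : CE * Cexp ≤ C := by
        have h2 : 0 ≤ (S.card : ℝ) * CD * K1' := by positivity
        have h3 : 0 ≤ CD * K1 := by positivity
        rw [hCdef]; nlinarith
      calc s^(α+β) * |E x| ≤ s^(α+β) * CE := by
              apply mul_le_mul_of_nonneg_left hEb (by positivity)
        _ ≤ ((s * φ x) ^ (α+β) * Cexp) * CE := by
              apply mul_le_mul_of_nonneg_right hsm hCE0
        _ = (s * φ x) ^ (α+β) * (CE * Cexp) := by ring
        _ ≤ (s * φ x) ^ (α+β) * C := by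
              apply mul_le_mul_of_nonneg_left hCge (by positivity)
        _ = C * (s * φ x) ^ (α+β) := by ring
        _ ≤ C * ((δ:ℝ) * ((α:ℝ) + β) * (s * φ x) ^ (α + β) * lam ^ (α + β + δ - 1)) := by
              apply mul_le_mul_of_nonneg_left _ hCpos.le
              have h2 : (0:ℝ) ≤ (s * φ x) ^ (α + β) := by positivity
              calc (s * φ x) ^ (α+β) ≤ (δ:ℝ) * ((α:ℝ) + β) * (s * φ x) ^ (α+β) :=
                    le_mul_of_one_le_left h2 hδmR
                _ ≤ (δ:ℝ) * ((α:ℝ) + β) * (s * φ x) ^ (α+β) * lam ^ (α + β + δ - 1) := by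
                    apply le_mul_of_one_le_right _ hlamp
                    exact mul_nonneg (by positivity) h2
  constructor
  · rw [hID, hsplit]
    have hkey : s^(α+β) * D (α,β) x + (∑ p ∈ S.erase (α,β), s^(p.1+p.2) * D p x)
        - ((α:ℝ)+β)^δ * (-(s * φ x))^(α+β) * lam^(α+β+δ) * (deriv ψ x)^(α+β+δ)
        = (∑ p ∈ S.erase (α,β), s^(p.1+p.2) * D p x) + s^(α+β) * E x := by
      rw [hMid]
      simp only [hE]
      ring
    rw [hkey]
    calc |(∑ p ∈ S.erase (α,β), s^(p.1+p.2) * D p x) + s^(α+β) * E x|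
        ≤ |∑ p ∈ S.erase (α,β), s^(p.1+p.2) * D p x| + |s^(α+β) * E x| := abs_add_le _ _
      _ = |∑ p ∈ S.erase (α,β), s^(p.1+p.2) * D p x| + s^(α+β) * |E x| := by
          rw [abs_mul, abs_pow, abs_of_pos hspos]
      _ ≤ C * (((α:ℝ) * ((α:ℝ) - 1) + (β:ℝ) * ((β:ℝ) - 1)) * s ^ (α + β - 1))
          + C * ((δ:ℝ) * ((α:ℝ) + β) * (s * φ x) ^ (α + β) * lam ^ (α + β + δ - 1)) :=
          add_le_add hRestBound hEBound
      _ = C * ((δ:ℝ) * ((α:ℝ) + β) * (s * φ x) ^ (α + β) * lam ^ (α + β + δ - 1)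
          + ((α:ℝ) * ((α:ℝ) - 1) + (β:ℝ) * ((β:ℝ) - 1)) * s ^ (α + β - 1)) := by ring
  · rw [hID]
    calc |∑ p ∈ S, s^(p.1+p.2) * D p x| ≤ ∑ p ∈ S, |s^(p.1+p.2) * D p x| :=
          Finset.abs_sum_le_sum_abs _ _
      _ ≤ ∑ p ∈ S, s^(α+β) * K1 * |D p x| := by
          apply Finset.sum_le_sum
          intro p hp
          rw [abs_mul, abs_pow, abs_of_pos hspos]
          apply mul_le_mul_of_nonneg_right _ (abs_nonneg _)
          have hple : p.1 + p.2 ≤ α + β := by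
            rw [hS, Finset.mem_product, Finset.mem_range, Finset.mem_range] at hp
            omega
          exact pow_le_pow_helper hs0pos hs0s hple
      _ = s^(α+β) * K1 * ∑ p ∈ S, |D p x| := by rw [Finset.mul_sum]
      _ ≤ s^(α+β) * K1 * CD := by
          apply mul_le_mul_of_nonneg_left (hCD x hx)
          exact mul_nonneg (pow_nonneg hspos.le _) hK1pos.le
      _ = (CD * K1) * s^(α+β) := by ring
      _ ≤ C * s^(α+β) := by
          apply mul_le_mul_of_nonneg_right _ (pow_nonneg hspos.le _)
          have h1 : 0 < (CE + 1) * Cexp := mul_pos (by linarith) hCexppos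
          have h2 : 0 ≤ (S.card : ℝ) * CD * K1' :=
            mul_nonneg (mul_nonneg (Nat.cast_nonneg _) hCD0) hK1'pos.le
          rw [hCdef]; linarith
end

section
/- Let ϑ be as in the non-uniform mesh setting and set ν = 1/(Q^{𝔐₀}_𝔐 ζ̄), a primal discrete function on the uniform mesh 𝔐₀. Then there exists a constant C depending only on ϑ (through ‖ϑ''‖_∞, ‖ϑ'''‖_∞, ‖ϑ^{(4)}‖_∞ and inf ϑ') such that, uniformly over all refinements (all r ∈ ℕ*, i.e. all h): max_i |(D̄Dν)_i| ≤ C, max_i |(D̄ν̃)_i| ≤ C, and 0 < (sup ϑ')^{-1} ≤ ν_i ≤ (inf ϑ')^{-1}, so in particular 0 < ‖ν‖_∞, ‖ν̃‖_∞ < ∞ uniformly in h. Here D, D̄ and the primal average ν̃ are the uniform-mesh operators with step h. Moreover the bound on D̄Dν can be taken of the form C' (inf ϑ')^{-3} for small h, with C' depending on ‖ϑ''‖_∞ and higher derivatives of ϑ. -/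
open Set


noncomputable def Fnu (ϑ : ℝ → ℝ) (h t : ℝ) : ℝ := 2 * h / (ϑ (t + h) - ϑ (t - h))

lemma mvt' {f : ℝ → ℝ} (hf : Differentiable ℝ f) {a b : ℝ} (hab : a < b) :
    ∃ c ∈ Set.Ioo a b, f b - f a = deriv f c * (b - a) := by
  obtain ⟨c, hc, hc'⟩ := exists_deriv_eq_slope f hab hf.continuous.continuousOn
    hf.differentiableOn
  refine ⟨c, hc, ?_⟩
  rw [hc', div_mul_cancel₀]
  exact ne_of_gt (sub_pos.2 hab)

lemma secdiff {f : ℝ → ℝ} (hf : Differentiable ℝ f) (hf' : Differentiable ℝ (deriv f))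
    {t h : ℝ} (hh : 0 < h) :
    ∃ ξ ∈ Set.Ioo (t - h) (t + h),
      f (t + h) - 2 * f t + f (t - h) = deriv (deriv f) ξ * h ^ 2 := by
  have hG : Differentiable ℝ (fun x => f (x + h) - f x) :=
    (hf.comp (differentiable_id.add_const h)).sub hf
  obtain ⟨η, hη, hη'⟩ := mvt' hG (show t - h < t by linarith)
  have hdG : deriv (fun x => f (x + h) - f x) η = deriv f (η + h) - deriv f η := by
    have h1 : HasDerivAt (fun x => f (x + h)) (deriv f (η + h)) η := by
      simpa [Function.comp_def] using (hf (η + h)).hasDerivAt.comp η ((hasDerivAt_id η).add_const h)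
    exact (h1.sub (hf η).hasDerivAt).deriv
  obtain ⟨ξ, hξ, hξ'⟩ := mvt' hf' (show η < η + h by linarith)
  obtain ⟨hη1, hη2⟩ := hη
  refine ⟨ξ, ⟨by linarith [hξ.1], by linarith [hξ.2]⟩, ?_⟩
  have e : t - h + h = t := by ring
  rw [e, hdG, hξ'] at hη'
  have key : f (t + h) - 2 * f t + f (t - h)
      = deriv (deriv f) ξ * (η + h - η) * (t - (t - h)) := by linarith [hη']
  rw [key]; ring

set_option maxHeartbeats 1600000 in
lemma mainlem (ϑ : ℝ → ℝ) (hmono : StrictMono ϑ) (hsm : ContDiff ℝ (⊤ : ℕ∞) ϑ)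
    (hinf : 0 < sInf (deriv ϑ '' Set.Icc (0 : ℝ) 1)) :
    ∃ C : ℝ, 0 < C ∧ ∀ h : ℝ, 0 < h →
      (∀ t : ℝ, 2 * h ≤ t → t + 2 * h ≤ 1 →
        |(Fnu ϑ h (t + h) - 2 * Fnu ϑ h t + Fnu ϑ h (t - h)) / h ^ 2| ≤ C ∧
        |(Fnu ϑ h (t + h) - Fnu ϑ h (t - h)) / (2 * h)| ≤ C) ∧
      (∀ t : ℝ, h ≤ t → t + h ≤ 1 →
        (sSup (deriv ϑ '' Set.Icc (0 : ℝ) 1))⁻¹ ≤ Fnu ϑ h t ∧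
        Fnu ϑ h t ≤ (sInf (deriv ϑ '' Set.Icc (0 : ℝ) 1))⁻¹) := by
  have hsm' : ContDiff ℝ ((⊤ : ℕ∞) : WithTop ℕ∞) ϑ := hsm.of_le (by simp)
  have hd0 : Differentiable ℝ ϑ := hsm'.differentiable (by simp)
  have h1 : ContDiff ℝ ((⊤ : ℕ∞) : WithTop ℕ∞) (deriv ϑ) := (contDiff_infty_iff_deriv.mp hsm').2
  have hd1 : Differentiable ℝ (deriv ϑ) := h1.differentiable (by simp)
  have h2 : ContDiff ℝ ((⊤ : ℕ∞) : WithTop ℕ∞) (deriv (deriv ϑ)) := (contDiff_infty_iff_deriv.mp h1).2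
  have hd2 : Differentiable ℝ (deriv (deriv ϑ)) := h2.differentiable (by simp)
  -- bounds for second and third derivatives on [0,1]
  obtain ⟨M2, hM2⟩ := isCompact_Icc.exists_bound_of_continuousOn
    (hd2.continuous.continuousOn : ContinuousOn (deriv (deriv ϑ)) (Icc (0:ℝ) 1))
  have h3cont : Continuous (deriv (deriv (deriv ϑ))) :=
    h2.continuous_deriv (by exact_mod_cast le_top)
  obtain ⟨M3, hM3⟩ := isCompact_Icc.exists_bound_of_continuousOn
    (h3cont.continuousOn : ContinuousOn (deriv (deriv (deriv ϑ))) (Icc (0:ℝ) 1))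
  simp only [Real.norm_eq_abs] at hM2 hM3
  have hM2nn : 0 ≤ M2 := le_trans (abs_nonneg _) (hM2 0 ⟨le_refl 0, zero_le_one⟩)
  have hM3nn : 0 ≤ M3 := le_trans (abs_nonneg _) (hM3 0 ⟨le_refl 0, zero_le_one⟩)
  set ι := sInf (deriv ϑ '' Set.Icc (0 : ℝ) 1) with hιdef
  set S := sSup (deriv ϑ '' Set.Icc (0 : ℝ) 1) with hSdef
  have hbddb : BddBelow (deriv ϑ '' Set.Icc (0 : ℝ) 1) :=
    (isCompact_Icc.image hd1.continuous).bddBelow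
  have hbdda : BddAbove (deriv ϑ '' Set.Icc (0 : ℝ) 1) :=
    (isCompact_Icc.image hd1.continuous).bddAbove
  have hιle : ∀ x ∈ Icc (0:ℝ) 1, ι ≤ deriv ϑ x := fun x hx => csInf_le hbddb ⟨x, hx, rfl⟩
  have hSle : ∀ x ∈ Icc (0:ℝ) 1, deriv ϑ x ≤ S := fun x hx => le_csSup hbdda ⟨x, hx, rfl⟩
  have hι : 0 < ι := hinf
  set B1 := M2 / ι ^ 2 with hB1
  set B2 := M3 / ι ^ 2 + 2 * M2 ^ 2 / ι ^ 3 with hB2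
  refine ⟨max 1 (max B1 B2), lt_of_lt_of_le one_pos (le_max_left _ _), ?_⟩
  intro h hh
  -- the functions
  set Δ : ℝ → ℝ := fun t => ϑ (t + h) - ϑ (t - h) with hΔdef
  set Δ1 : ℝ → ℝ := fun t => deriv ϑ (t + h) - deriv ϑ (t - h) with hΔ1def
  set Δ2 : ℝ → ℝ := fun t => deriv (deriv ϑ) (t + h) - deriv (deriv ϑ) (t - h) with hΔ2def
  have hshift : ∀ (g : ℝ → ℝ), Differentiable ℝ g → ∀ c t : ℝ,
      HasDerivAt (fun x => g (x + c)) (deriv g (t + c)) t := by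
    intro g hg c t
    simpa [Function.comp_def] using (hg (t + c)).hasDerivAt.comp t ((hasDerivAt_id t).add_const c)
  have hΔ' : ∀ t, HasDerivAt Δ (Δ1 t) t := fun t =>
    (hshift ϑ hd0 h t).sub (by simpa [sub_eq_add_neg] using hshift ϑ hd0 (-h) t)
  have hΔ1' : ∀ t, HasDerivAt Δ1 (Δ2 t) t := fun t =>
    (hshift _ hd1 h t).sub (by simpa [sub_eq_add_neg] using hshift _ hd1 (-h) t)
  have hΔpos : ∀ t, 0 < Δ t := fun t => sub_pos.2 (hmono (by linarith))
  set f1 : ℝ → ℝ := fun t => (0 * Δ t - 2 * h * Δ1 t) / Δ t ^ 2 with hf1def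
  have hf' : ∀ t, HasDerivAt (Fnu ϑ h) (f1 t) t := by
    intro t
    exact (hasDerivAt_const t (2 * h)).div (hΔ' t) (ne_of_gt (hΔpos t))
  set f2 : ℝ → ℝ := fun t =>
    ((0 * Δ t - 2 * h * Δ2 t) * Δ t ^ 2 - (0 * Δ t - 2 * h * Δ1 t) * (2 * Δ t ^ 1 * Δ1 t))
      / (Δ t ^ 2) ^ 2 with hf2def
  have hf1' : ∀ t, HasDerivAt f1 (f2 t) t := by
    intro t
    have hnum : HasDerivAt (fun t => 0 * Δ t - 2 * h * Δ1 t) (0 * Δ t - 2 * h * Δ2 t) t := by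
      simpa [Pi.sub_def] using (((hΔ' t).const_mul 0)).sub ((hΔ1' t).const_mul (2 * h))
    have hden : HasDerivAt (fun t => Δ t ^ 2) (2 * Δ t ^ 1 * Δ1 t) t := by
      simpa [Pi.pow_def] using (hΔ' t).pow 2
    exact hnum.div hden (pow_ne_zero 2 (ne_of_gt (hΔpos t)))
  have hF : Differentiable ℝ (Fnu ϑ h) := fun t => (hf' t).differentiableAt
  have hdF : deriv (Fnu ϑ h) = f1 := funext fun t => (hf' t).deriv
  have hF1 : Differentiable ℝ (deriv (Fnu ϑ h)) := by
    rw [hdF]; exact fun t => (hf1' t).differentiableAt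
  have hddF : deriv (deriv (Fnu ϑ h)) = f2 := by
    rw [hdF]; exact funext fun t => (hf1' t).deriv
  -- pointwise bounds on Δ, Δ1, Δ2 for t with [t-h,t+h] ⊆ [0,1]
  have hmem : ∀ {t : ℝ}, 0 ≤ t - h → t + h ≤ 1 → ∀ c ∈ Ioo (t - h) (t + h), c ∈ Icc (0:ℝ) 1 :=
    fun ht0 ht1 c hc => ⟨by linarith [hc.1], by linarith [hc.2]⟩
  have hΔmvt : ∀ t : ℝ, 0 ≤ t - h → t + h ≤ 1 →
      ∃ c ∈ Icc (0:ℝ) 1, Δ t = deriv ϑ c * (2 * h) := by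
    intro t ht0 ht1
    obtain ⟨c, hc, hc'⟩ := mvt' hd0 (show t - h < t + h by linarith)
    exact ⟨c, hmem ht0 ht1 c hc, by rw [hΔdef]; simpa using by rw [hc']; ring⟩
  have hΔlow : ∀ t : ℝ, 0 ≤ t - h → t + h ≤ 1 → 2 * h * ι ≤ Δ t := by
    intro t ht0 ht1
    obtain ⟨c, hc, hc'⟩ := hΔmvt t ht0 ht1
    rw [hc']
    have := hιle c hc
    nlinarith
  have hΔ1bd : ∀ t : ℝ, 0 ≤ t - h → t + h ≤ 1 → |Δ1 t| ≤ 2 * h * M2 := by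
    intro t ht0 ht1
    obtain ⟨c, hc, hc'⟩ := mvt' hd1 (show t - h < t + h by linarith)
    have : Δ1 t = deriv (deriv ϑ) c * (2 * h) := by
      rw [hΔ1def]; simpa using by rw [hc']; ring
    rw [this, abs_mul, abs_of_pos (show (0:ℝ) < 2 * h by linarith)]
    have := hM2 c (hmem ht0 ht1 c hc)
    nlinarith
  have hΔ2bd : ∀ t : ℝ, 0 ≤ t - h → t + h ≤ 1 → |Δ2 t| ≤ 2 * h * M3 := by
    intro t ht0 ht1
    obtain ⟨c, hc, hc'⟩ := mvt' hd2 (show t - h < t + h by linarith)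
    have : Δ2 t = deriv (deriv (deriv ϑ)) c * (2 * h) := by
      rw [hΔ2def]; simpa using by rw [hc']; ring
    rw [this, abs_mul, abs_of_pos (show (0:ℝ) < 2 * h by linarith)]
    have := hM3 c (hmem ht0 ht1 c hc)
    nlinarith
  constructor
  · -- derivative bounds
    intro t ht0 ht1
    have hf2bd : ∀ s : ℝ, 0 ≤ s - h → s + h ≤ 1 → |f2 s| ≤ B2 := by
      intro s hs0 hs1
      have hd := hΔlow s hs0 hs1
      have hdpos := hΔpos s
      have ha := hΔ1bd s hs0 hs1
      have hb := hΔ2bd s hs0 hs1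
      have hdne : Δ s ≠ 0 := ne_of_gt hdpos
      have hsplit : f2 s = -(2 * h * Δ2 s) / Δ s ^ 2 + 4 * h * Δ1 s ^ 2 / Δ s ^ 3 := by
        rw [hf2def]; field_simp; ring
      rw [hsplit]
      have habs : |(-(2 * h * Δ2 s) / Δ s ^ 2 + 4 * h * Δ1 s ^ 2 / Δ s ^ 3)|
          ≤ |2 * h * Δ2 s| / Δ s ^ 2 + |4 * h * Δ1 s ^ 2| / Δ s ^ 3 := by
        refine le_trans (abs_add_le _ _) ?_
        rw [abs_div, abs_div, abs_neg]
        gcongr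
        · exact le_abs_self _
        · exact le_abs_self _
      refine le_trans habs ?_
      have ht1' : |2 * h * Δ2 s| / Δ s ^ 2 ≤ M3 / ι ^ 2 := by
        have e1 : |2 * h * Δ2 s| ≤ 2 * h * (2 * h * M3) := by
          rw [abs_mul, abs_of_pos (show (0:ℝ) < 2 * h by linarith)]
          nlinarith
        have e2 : (2 * h * ι) ^ 2 ≤ Δ s ^ 2 := by
          have : 0 ≤ 2 * h * ι := by positivity
          nlinarith
        have := div_le_div₀ (by positivity) e1 (by positivity) e2
        refine le_trans this (le_of_eq ?_)
        field_simp
      have ht2' : |4 * h * Δ1 s ^ 2| / Δ s ^ 3 ≤ 2 * M2 ^ 2 / ι ^ 3 := by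
        have e1 : |4 * h * Δ1 s ^ 2| ≤ 4 * h * (2 * h * M2) ^ 2 := by
          rw [abs_mul, abs_of_pos (show (0:ℝ) < 4 * h by linarith), abs_pow]
          have e0 : |Δ1 s| ^ 2 ≤ (2 * h * M2) ^ 2 := pow_le_pow_left₀ (abs_nonneg _) ha 2
          nlinarith [e0]
        have e2 : (2 * h * ι) ^ 3 ≤ Δ s ^ 3 := by
          have h0 : 0 ≤ 2 * h * ι := by positivity
          exact pow_le_pow_left₀ h0 hd 3
        have := div_le_div₀ (by positivity) e1 (by positivity) e2
        refine le_trans this (le_of_eq ?_)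
        field_simp
        ring
      rw [hB2]; linarith
    constructor
    · -- second difference
      obtain ⟨ξ, hξ, hξ'⟩ := secdiff hF hF1 (t := t) hh
      rw [hξ', hddF]
      have hb := hf2bd ξ (by cases hξ; linarith) (by cases hξ; linarith)
      rw [abs_div, abs_mul]
      rw [abs_of_pos (show (0:ℝ) < h ^ 2 by positivity)]
      rw [mul_div_assoc, div_self (by positivity : (h:ℝ) ^ 2 ≠ 0), mul_one]
      exact le_trans hb (le_trans (le_max_right B1 B2) (le_max_right _ _))
    · -- central difference
      obtain ⟨ξ, hξ, hξ'⟩ := mvt' hF (show t - h < t + h by linarith)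
      have e : t + h - (t - h) = 2 * h := by ring
      rw [e] at hξ'
      rw [hξ', hdF]
      have hs0 : 0 ≤ ξ - h := by cases hξ; linarith
      have hs1 : ξ + h ≤ 1 := by cases hξ; linarith
      have hd := hΔlow ξ hs0 hs1
      have ha := hΔ1bd ξ hs0 hs1
      have hdpos := hΔpos ξ
      have hf1bd : |f1 ξ| ≤ B1 := by
        rw [hf1def]
        simp only [zero_mul, zero_sub]
        rw [abs_div, abs_neg, abs_mul, abs_of_pos (show (0:ℝ) < 2 * h by linarith)]
        have e1 : 2 * h * |Δ1 ξ| ≤ 2 * h * (2 * h * M2) := by nlinarith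
        have e2 : (2 * h * ι) ^ 2 ≤ |Δ ξ ^ 2| := by
          rw [abs_of_pos (by positivity)]
          nlinarith [mul_pos (mul_pos two_pos hh) hι]
        have := div_le_div₀ (by positivity) e1 (by positivity) e2
        refine le_trans this (le_trans (le_of_eq ?_) (le_of_eq hB1.symm))
        field_simp
      rw [abs_div, abs_mul]
      rw [abs_of_pos (show (0:ℝ) < 2 * h by linarith)]
      rw [mul_div_assoc, div_self (by positivity : (2 * h : ℝ) ≠ 0), mul_one]
      exact le_trans hf1bd (le_trans (le_max_left B1 B2) (le_max_right _ _))
  · -- value bounds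
    intro t ht0 ht1
    obtain ⟨c, hc, hc'⟩ := hΔmvt t (by linarith) ht1
    have hvc : 0 < deriv ϑ c := lt_of_lt_of_le hι (hιle c hc)
    have hFval : Fnu ϑ h t = (deriv ϑ c)⁻¹ := by
      show 2 * h / Δ t = (deriv ϑ c)⁻¹
      rw [hc']
      field_simp
    rw [hFval]
    constructor
    · exact inv_anti₀ hvc (hSle c hc)
    · exact inv_anti₀ hι (hιle c hc)

lemma Fnu_def : ∀ (ϑ : ℝ → ℝ) (h t : ℝ), Fnu ϑ h t = 2 * h / (ϑ (t + h) - ϑ (t - h)) :=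
  fun _ _ _ => rfl

/-- Uniform (in `h`) bounds for `ν = 1/(Q ζ̄)` on the uniform reference mesh:
`|D̄Dν| ≤ C`, `|D̄ν̃| ≤ C`, `0 < (sup ϑ')⁻¹ ≤ ν ≤ (inf ϑ')⁻¹`, with `C` depending only
on `ϑ`; moreover, for `h` small the bound on `D̄Dν` can be taken of the form
`C' (inf ϑ')⁻³`.  Here `ν_i = h / h'_i`, `(D̄Dν)_i = (ν_{i+1} - 2ν_i + ν_{i-1})/h²`,
`(D̄ν̃)_i = (ν_{i+1} - ν_{i-1})/(2h)`. -/
theorem stmt14 (Ω : Set ℝ) (ϑ : ℝ → ℝ) (hmono : StrictMono ϑ) (hsm : ContDiff ℝ (⊤ : ℕ∞) ϑ)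
    (hΩ : ϑ '' Set.Ioo 0 1 = Ω)
    (hinf : 0 < sInf (deriv ϑ '' Set.Icc (0 : ℝ) 1)) :
    (∃ C : ℝ, 0 < C ∧ ∀ n m : ℕ, 1 ≤ n → 1 ≤ m →
      (let h : ℝ := 1 / ((n : ℝ) + (m : ℝ) + 2)
       let x' : ℕ → ℝ := fun i => ϑ ((i : ℝ) * h)
       let ν : ℕ → ℝ := fun i => h / ((x' (i + 1) - x' (i - 1)) / 2)
       (∀ i, 2 ≤ i → i ≤ n + m → |(ν (i + 1) - 2 * ν i + ν (i - 1)) / h ^ 2| ≤ C) ∧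
       (∀ i, 2 ≤ i → i ≤ n + m → |(ν (i + 1) - ν (i - 1)) / (2 * h)| ≤ C) ∧
       (0 < (sSup (deriv ϑ '' Set.Icc (0 : ℝ) 1))⁻¹) ∧
       (∀ i, 1 ≤ i → i ≤ n + m + 1 →
          (sSup (deriv ϑ '' Set.Icc (0 : ℝ) 1))⁻¹ ≤ ν i
          ∧ ν i ≤ (sInf (deriv ϑ '' Set.Icc (0 : ℝ) 1))⁻¹))) ∧
    (∃ C' h0 : ℝ, 0 < C' ∧ 0 < h0 ∧ ∀ n m : ℕ, 1 ≤ n → 1 ≤ m →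
      1 / ((n : ℝ) + (m : ℝ) + 2) ≤ h0 →
      (let h : ℝ := 1 / ((n : ℝ) + (m : ℝ) + 2)
       let x' : ℕ → ℝ := fun i => ϑ ((i : ℝ) * h)
       let ν : ℕ → ℝ := fun i => h / ((x' (i + 1) - x' (i - 1)) / 2)
       ∀ i, 2 ≤ i → i ≤ n + m →
         |(ν (i + 1) - 2 * ν i + ν (i - 1)) / h ^ 2|
           ≤ C' * ((sInf (deriv ϑ '' Set.Icc (0 : ℝ) 1))⁻¹) ^ 3)) := by
  obtain ⟨C, hC, hmain⟩ := mainlem ϑ hmono hsm hinf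
  set ι := sInf (deriv ϑ '' Set.Icc (0 : ℝ) 1) with hιdef
  set S := sSup (deriv ϑ '' Set.Icc (0 : ℝ) 1) with hSdef
  have hd1 : Continuous (deriv ϑ) :=
    ((hsm.of_le (le_refl ((⊤ : ℕ∞) : WithTop ℕ∞))).continuous_deriv
      (by exact_mod_cast le_top))
  have hK : IsCompact (deriv ϑ '' Set.Icc (0:ℝ) 1) := isCompact_Icc.image hd1
  have hmem0 : deriv ϑ 0 ∈ deriv ϑ '' Set.Icc (0:ℝ) 1 :=
    ⟨0, ⟨le_refl 0, zero_le_one⟩, rfl⟩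
  have hSpos : 0 < S :=
    lt_of_lt_of_le hinf (le_trans (csInf_le hK.bddBelow hmem0) (le_csSup hK.bddAbove hmem0))
  -- the core estimate, used in both parts
  have core : ∀ n m : ℕ, 1 ≤ n → 1 ≤ m →
      (let h : ℝ := 1 / ((n : ℝ) + (m : ℝ) + 2)
       let x' : ℕ → ℝ := fun i => ϑ ((i : ℝ) * h)
       let ν : ℕ → ℝ := fun i => h / ((x' (i + 1) - x' (i - 1)) / 2)
       (∀ i, 2 ≤ i → i ≤ n + m → |(ν (i + 1) - 2 * ν i + ν (i - 1)) / h ^ 2| ≤ C) ∧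
       (∀ i, 2 ≤ i → i ≤ n + m → |(ν (i + 1) - ν (i - 1)) / (2 * h)| ≤ C) ∧
       (0 < S⁻¹) ∧
       (∀ i, 1 ≤ i → i ≤ n + m + 1 → S⁻¹ ≤ ν i ∧ ν i ≤ ι⁻¹)) := by
    intro n m hn hm
    intro h x' ν
    have hNpos : (0:ℝ) < (n : ℝ) + (m : ℝ) + 2 := by positivity
    have hh : 0 < h := by positivity
    have hsum : ((n : ℝ) + (m : ℝ) + 2) * h = 1 := by
      show ((n : ℝ) + (m : ℝ) + 2) * (1 / ((n : ℝ) + (m : ℝ) + 2)) = 1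
      field_simp
    have hν : ∀ j : ℕ, 1 ≤ j → ν j = Fnu ϑ h ((j : ℝ) * h) := by
      intro j hj
      show h / ((ϑ (((j + 1 : ℕ) : ℝ) * h) - ϑ (((j - 1 : ℕ) : ℝ) * h)) / 2) = _
      rw [Fnu_def]
      have e1 : (((j + 1 : ℕ) : ℝ)) * h = (j : ℝ) * h + h := by push_cast; ring
      have e2 : (((j - 1 : ℕ) : ℝ)) * h = (j : ℝ) * h - h := by
        rw [Nat.cast_sub hj]; push_cast; ring
      rw [e1, e2, div_div_eq_mul_div]
      ring_nf
    have hrange : ∀ i : ℕ, 2 ≤ i → i ≤ n + m →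
        2 * h ≤ (i : ℝ) * h ∧ (i : ℝ) * h + 2 * h ≤ 1 := by
      intro i hi2 hiN
      constructor
      · have : (2 : ℝ) ≤ (i : ℝ) := by exact_mod_cast hi2
        nlinarith
      · have : (i : ℝ) ≤ (n : ℝ) + (m : ℝ) := by exact_mod_cast hiN
        nlinarith
    have hrw : ∀ i : ℕ, 2 ≤ i →
        ν (i + 1) = Fnu ϑ h ((i : ℝ) * h + h) ∧
        ν i = Fnu ϑ h ((i : ℝ) * h) ∧
        ν (i - 1) = Fnu ϑ h ((i : ℝ) * h - h) := by
      intro i hi2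
      refine ⟨?_, hν i (by omega), ?_⟩
      · rw [hν (i + 1) (by omega)]
        congr 1
        push_cast; ring
      · rw [hν (i - 1) (by omega)]
        congr 1
        rw [Nat.cast_sub (by omega : 1 ≤ i)]; push_cast; ring
    refine ⟨?_, ?_, inv_pos.2 hSpos, ?_⟩
    · intro i hi2 hiN
      obtain ⟨e1, e2, e3⟩ := hrw i hi2
      rw [e1, e2, e3]
      exact ((hmain h hh).1 _ (hrange i hi2 hiN).1 (hrange i hi2 hiN).2).1
    · intro i hi2 hiN
      obtain ⟨e1, e2, e3⟩ := hrw i hi2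
      rw [e1, e3]
      exact ((hmain h hh).1 _ (hrange i hi2 hiN).1 (hrange i hi2 hiN).2).2
    · intro i hi1 hiN
      rw [hν i hi1]
      refine (hmain h hh).2 _ ?_ ?_
      · have : (1 : ℝ) ≤ (i : ℝ) := by exact_mod_cast hi1
        nlinarith
      · have : (i : ℝ) ≤ (n : ℝ) + (m : ℝ) + 1 := by exact_mod_cast hiN
        nlinarith
  refine ⟨⟨C, hC, core⟩, ⟨C * ι ^ 3 + 1, 1, ?_, one_pos, ?_⟩⟩
  · have : (0:ℝ) < ι ^ 3 := by positivity
    nlinarith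
  · intro n m hn hm _
    intro h x' ν i hi2 hiN
    have h1 := ((core n m hn hm).1 i hi2 hiN)
    refine le_trans h1 ?_
    have hιne : ι ≠ 0 := ne_of_gt hinf
    have he : (C * ι ^ 3 + 1) * (ι⁻¹) ^ 3 = C + (ι⁻¹) ^ 3 := by
      field_simp
    rw [he]
    have : (0:ℝ) < (ι⁻¹) ^ 3 := by positivity
    linarith
end
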